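/- arXiv:2312.13078 — 6 statements merged into one kernel-verified Lean document; each statement's English description precedes it below -/
import Mathlib

section
/- Let X and Y be path-connected Hausdorff topological spaces with Y simply connected, and let f : X → Y be a local homeomorphism. Then f is a homeomorphism of X onto Y if and only if f is a proper map (preimages of compact sets are compact). -/
/-!
Over a compact set `K ⊆ Y` with compact preimage, `f` restricts to a local homeomorphism
`f ⁻¹' K → K` between compact Hausdorff spaces, which is a covering map. Hence every path in `Y`
lifts to `X` from any point over its start, so `f` is onto the path-connected `Y`. If `f x₁ = f x₂`,
the image of a path from `x₁` to `x₂` is null-homotopic; lifting every path of the null-homotopy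
from `x₁`, the monodromy theorem shows that the endpoints `x₂` and `x₁` of the extreme lifts
coincide.
-/

open Set unitInterval

theorem IsLocallyInjective.of_comp {X Y Z : Type*} [TopologicalSpace X] {f : X → Y} {g : Y → Z}
    (h : IsLocallyInjective (g ∘ f)) : IsLocallyInjective f :=
  fun x ↦ let ⟨U, hU, hx, inj⟩ := h x; ⟨U, hU, hx, inj.of_comp⟩

section

variable {X Y : Type*} [TopologicalSpace X] [TopologicalSpace Y] {f : X → Y}

theorem IsLocalHomeomorph.of_isOpenMap_of_isLocallyInjective (hc : Continuous f)
    (ho : IsOpenMap f) (hi : IsLocallyInjective f) : IsLocalHomeomorph f := fun x ↦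
  let ⟨U, hU, hx, inj⟩ := hi x
  haveI : Nonempty X := ⟨x⟩
  ⟨.ofContinuousOpenRestrict (inj.toPartialEquiv f U) hc.continuousOn (ho.domRestrict hU) hU,
    hx, rfl⟩

theorem IsLocalHomeomorph.restrictPreimage (hf : IsLocalHomeomorph f) (s : Set Y) :
    IsLocalHomeomorph (s.restrictPreimage f) :=
  .of_isOpenMap_of_isLocallyInjective hf.continuous.restrictPreimage
    (hf.isOpenMap.restrictPreimage s)
    (IsLocallyInjective.of_comp (g := Subtype.val)
      (hf.isLocallyInjective.comp_right continuous_subtype_val Subtype.val_injective))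

theorem IsLocalHomeomorph.isCoveringMap_restrictPreimage [T2Space X] [T2Space Y]
    (hf : IsLocalHomeomorph f) {K : Set Y} (hK : IsCompact (f ⁻¹' K)) :
    IsCoveringMap (K.restrictPreimage f) :=
  haveI := isCompact_iff_compactSpace.mp hK
  isLocalHomeomorph_iff_isCoveringMap.mp (hf.restrictPreimage K)

theorem IsLocalHomeomorph.exists_path_lifts [T2Space X] [T2Space Y] (hf : IsLocalHomeomorph f)
    (γ : C(I, Y)) (hγ : IsCompact (f ⁻¹' range γ)) (x : X) (hx : γ 0 = f x) :
    ∃ Γ : C(I, X), f ∘ Γ = γ ∧ Γ 0 = x := by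
  obtain ⟨Γ, hΓ, hΓ0⟩ := (hf.isCoveringMap_restrictPreimage hγ).exists_path_lifts
    ⟨rangeFactorization γ, γ.continuous.rangeFactorization⟩ ⟨x, 0, hx⟩ (Subtype.ext hx)
  exact ⟨.comp ⟨Subtype.val, continuous_subtype_val⟩ Γ,
    funext fun t ↦ congr_arg Subtype.val (congr_fun hΓ t), congr_arg Subtype.val hΓ0⟩

theorem IsLocalHomeomorph.surjective_of_isCompact_preimage [T2Space X] [T2Space Y] [Nonempty X]
    [PathConnectedSpace Y] (hf : IsLocalHomeomorph f)
    (hprop : ∀ K : Set Y, IsCompact K → IsCompact (f ⁻¹' K)) : Function.Surjective f := by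
  intro y
  obtain ⟨x⟩ := ‹Nonempty X›
  let γ := PathConnectedSpace.somePath (f x) y
  obtain ⟨Γ, hΓ, -⟩ := hf.exists_path_lifts γ (hprop _ (isCompact_range γ.continuous)) x γ.source
  exact ⟨Γ 1, (congr_fun hΓ 1).trans γ.target⟩

theorem IsLocalHomeomorph.injective_of_isCompact_preimage [T2Space X] [T2Space Y]
    [PathConnectedSpace X] [SimplyConnectedSpace Y] (hf : IsLocalHomeomorph f)
    (hprop : ∀ K : Set Y, IsCompact K → IsCompact (f ⁻¹' K)) : Function.Injective f := by
  intro x₁ x₂ h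
  let p := PathConnectedSpace.somePath x₁ x₂
  obtain ⟨H⟩ := SimplyConnectedSpace.paths_homotopic ((p.map hf.continuous).cast rfl h)
    (Path.refl (f x₁))
  have lift (t : I) : ∃ Γ : C(I, X), f ∘ Γ = H.curry t ∧ Γ 0 = x₁ :=
    hf.exists_path_lifts _ (hprop _ (isCompact_range (H.curry t).continuous)) x₁ (H.source t)
  choose Γ hΓ hΓ0 using lift
  have sep := T2Space.isSeparatedMap f
  have lift_end := hf.monodromy_theorem sep H Γ (fun t s ↦ congr_fun (hΓ t) s)
    (fun t ↦ (hΓ0 t).trans (hΓ0 0).symm) 1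
  have hΓ1 : ⇑(Γ 1) = fun _ ↦ x₁ :=
    sep.eq_of_comp_eq hf.isLocallyInjective (Γ 1).continuous continuous_const
      (funext fun s ↦ by simpa using congr_fun (hΓ 1) s) 0 (hΓ0 1)
  have hΓ0p : ⇑(Γ 0) = p :=
    sep.eq_of_comp_eq hf.isLocallyInjective (Γ 0).continuous p.continuous
      (funext fun s ↦ by simpa using congr_fun (hΓ 0) s) 0 ((hΓ0 0).trans p.source.symm)
  calc x₁ = Γ 1 1 := (congr_fun hΓ1 1).symm
    _ = Γ 0 1 := lift_end
    _ = x₂ := (congr_fun hΓ0p 1).trans p.target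

end

theorem stmt2_general {X Y : Type*} [TopologicalSpace X] [TopologicalSpace Y]
    [PathConnectedSpace X] [T2Space X] [T2Space Y]
    [SimplyConnectedSpace Y] (f : X → Y) (hf : IsLocalHomeomorph f) :
    (∀ K : Set Y, IsCompact K → IsCompact (f ⁻¹' K)) ↔ ∃ e : X ≃ₜ Y, ⇑e = f := by
  refine ⟨fun hprop ↦ ?_, ?_⟩
  · exact ⟨hf.toHomeomorphOfBijective ⟨hf.injective_of_isCompact_preimage hprop,
      hf.surjective_of_isCompact_preimage hprop⟩, rfl⟩
  · rintro ⟨e, rfl⟩ K hK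
    exact e.isCompact_preimage.mpr hK

/-- A local homeomorphism between path-connected Hausdorff spaces, with simply connected
codomain, is a global homeomorphism onto the codomain if and only if it is proper. -/
theorem stmt2 {X Y : Type*} [TopologicalSpace X] [TopologicalSpace Y]
    [PathConnectedSpace X] [PathConnectedSpace Y] [T2Space X] [T2Space Y]
    [SimplyConnectedSpace Y] (f : X → Y) (hf : IsLocalHomeomorph f) :
    (∀ K : Set Y, IsCompact K → IsCompact (f ⁻¹' K)) ↔ ∃ e : X ≃ₜ Y, ⇑e = f :=
  stmt2_general f hf
end

section
/- Let Φ : U → ℝⁿ be a C¹ diffeomorphism on an open set U ⊂ ℝⁿ and λ ∈ (0,1). Then for every x₀ ∈ U there is r₀ > 0 with B(x₀,r₀) compactly contained in U such that for every r ∈ (0, r₀] there exists a C¹ diffeomorphism H₁ : U → ℝⁿ equal to the affine map x ↦ Φ(x₀) + DΦ(x₀)(x − x₀) on the closed ball B̄(x₀, λr) and equal to Φ on U \ B(x₀, r). -/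
/-!
Write `A x = Φ x₀ + DΦ(x₀) (x - x₀)` and take `H = A + (1 - χ) • (Φ - A)`, where `χ` is a
rescaled bump function, equal to `1` on `B̄(x₀, λr)`, supported in `B(x₀, r)`, with
`‖Dχ‖ ≤ L / r` for a constant `L` independent of `r`. On a ball `B(x₀, ρ)` where
`‖DΦ - DΦ(x₀)‖ ≤ ε`, the mean value inequality gives `‖Φ - A‖ ≤ ε r` on the support of `χ`, so
`‖DH - DΦ(x₀)‖ ≤ (1 + L) ε` regardless of `r`. For `ε` small this makes `DH` invertible and `H`
injective on `B(x₀, ρ)`. Outside `B(x₀, r)` we have `H = Φ`, and `H` moves points by at most `ε r`,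
while `Φ` (an embedding) keeps `B̄(x₀, ρ / 2)` at a positive distance `δ` from `U \ B(x₀, ρ)`; so
for `r ≤ δ / (2ε)` the map `H` is injective on all of `U`, hence an open embedding by the inverse
function theorem.
-/

open Function Metric Set Filter Topology
open scoped NNReal

theorem Units.isUnit_of_norm_sub_mul_lt {R : Type*} [NormedRing R] [HasSummableGeomSeries R]
    (u : Rˣ) {y : R} (h : ‖y - u‖ * ‖(↑u⁻¹ : R)‖ < 1) : IsUnit y := by
  have ht : ‖-((↑u⁻¹ : R) * (y - u))‖ < 1 := by
    rw [norm_neg]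
    exact (norm_mul_le _ _).trans_lt (by rwa [mul_comm])
  have hy : y = u * (1 - -((↑u⁻¹ : R) * (y - u))) := by
    rw [sub_neg_eq_add, mul_add, mul_one, ← mul_assoc, Units.mul_inv, one_mul, add_sub_cancel]
  rw [hy]
  exact u.isUnit.mul (Units.val_oneSub _ ht ▸ (Units.oneSub _ ht).isUnit)

theorem exists_pos_le_dist_of_isEmbedding_domRestrict {α Y : Type*} [TopologicalSpace α]
    [MetricSpace Y] {f : α → Y} {U K V : Set α} (hf : IsEmbedding (U.domRestrict f))
    (hK : IsCompact K) (hKU : K ⊆ U) (hV : IsOpen V) (hKV : K ⊆ V) :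
    ∃ δ > 0, ∀ a ∈ K, ∀ b ∈ U \ V, δ ≤ dist (f a) (f b) := by
  have hfK : IsCompact (f '' K) :=
    hK.image_of_continuousOn ((continuousOn_iff_continuous_domRestrict.2 hf.continuous).mono hKU)
  obtain ⟨W, hW, hWV⟩ := hf.isInducing.isOpen_iff.1 (hV.preimage continuous_subtype_val)
  have hdisj : Disjoint (f '' K) (closure (f '' (U \ V))) := by
    rw [Set.disjoint_left]
    rintro _ ⟨a, haK, rfl⟩ hcl
    have haW : f a ∈ W := (Set.ext_iff.1 hWV ⟨a, hKU haK⟩).2 (hKV haK)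
    obtain ⟨_, hbW, b, hb, rfl⟩ := mem_closure_iff.1 hcl W hW haW
    exact hb.2 ((Set.ext_iff.1 hWV ⟨b, hb.1⟩).1 hbW)
  obtain ⟨δ, hδ, hsep⟩ := exists_pos_forall_lt_edist hfK isClosed_closure hdisj
  refine ⟨δ, hδ, fun a ha b hb => ?_⟩
  have h := hsep _ (mem_image_of_mem f ha) _ (subset_closure (mem_image_of_mem f hb))
  rw [edist_nndist, ENNReal.coe_lt_coe] at h
  exact h.le

theorem injOn_of_eqOn_diff {α β : Type*} {f H : α → β} {U s K : Set α} (hf : InjOn f U)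
    (hHf : EqOn H f (U \ K)) (hKs : K ⊆ s) (hHs : InjOn H s)
    (hsep : ∀ x ∈ K, ∀ y ∈ U \ s, H x ≠ f y) : InjOn H U := by
  have hK : ∀ x ∈ K, ∀ y ∈ U, H x = H y → x = y := by
    intro x hxK y hy hxy
    by_cases hys : y ∈ s
    · exact hHs (hKs hxK) hys hxy
    · exact absurd (hxy.trans (hHf ⟨hy, fun h => hys (hKs h)⟩)) (hsep x hxK y ⟨hy, hys⟩)
  intro x hx y hy hxy
  by_cases hxK : x ∈ K
  · exact hK x hxK y hy hxy
  by_cases hyK : y ∈ K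
  · exact (hK y hyK x hx hxy.symm).symm
  exact hf hx hy (by rwa [← hHf ⟨hx, hxK⟩, ← hHf ⟨hy, hyK⟩])

def blend {E F : Type*} [AddCommGroup F] [Module ℝ F] (f g : E → F) (χ : E → ℝ) (x : E) : F :=
  g x + (1 - χ x) • (f x - g x)

section Blend

variable {E F : Type*} [NormedAddCommGroup F] [NormedSpace ℝ F] {f g : E → F} {χ : E → ℝ}
  {x : E}

theorem blend_of_eq_one (h : χ x = 1) : blend f g χ x = g x := by
  simp [blend, h]

theorem blend_of_eq_zero (h : χ x = 0) : blend f g χ x = f x := by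
  simp [blend, h]

theorem norm_blend_sub_le (h : χ x ∈ Icc 0 1) : ‖blend f g χ x - f x‖ ≤ ‖f x - g x‖ := by
  have hblend : blend f g χ x - f x = -(χ x • (f x - g x)) := by
    simp only [blend]
    module
  rw [hblend, norm_neg, norm_smul, Real.norm_of_nonneg h.1]
  exact mul_le_of_le_one_left (norm_nonneg _) h.2

variable [NormedAddCommGroup E] [NormedSpace ℝ E]

theorem ContDiffOn.blend {U : Set E} {n : WithTop ℕ∞} (hf : ContDiffOn ℝ n f U)
    (hg : ContDiffOn ℝ n g U) (hχ : ContDiffOn ℝ n χ U) : ContDiffOn ℝ n (blend f g χ) U :=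
  hg.add ((contDiffOn_const.sub hχ).smul (hf.sub hg))

theorem norm_fderiv_blend_sub_le (hf : DifferentiableAt ℝ f x) (hg : DifferentiableAt ℝ g x)
    (hχ : DifferentiableAt ℝ χ x) (h : χ x ∈ Icc 0 1) :
    ‖fderiv ℝ (blend f g χ) x - fderiv ℝ g x‖ ≤
      ‖fderiv ℝ f x - fderiv ℝ g x‖ + ‖fderiv ℝ χ x‖ * ‖f x - g x‖ := by
  have hderiv : HasFDerivAt (blend f g χ) (fderiv ℝ g x + ((1 - χ x) •
      (fderiv ℝ f x - fderiv ℝ g x) + (-fderiv ℝ χ x).smulRight (f x - g x))) x :=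
    hg.hasFDerivAt.add ((hχ.hasFDerivAt.const_sub 1).smul (hf.hasFDerivAt.sub hg.hasFDerivAt))
  rw [hderiv.fderiv, add_sub_cancel_left]
  refine (norm_add_le _ _).trans (add_le_add ?_ ?_)
  · rw [norm_smul, Real.norm_of_nonneg (sub_nonneg.2 h.2)]
    exact mul_le_of_le_one_left (norm_nonneg _) (by linarith [h.1])
  · rw [ContinuousLinearMap.norm_smulRight_apply, norm_neg]

end Blend

section Calculus

variable {E : Type*} [NormedAddCommGroup E] [NormedSpace ℝ E]

theorem Convex.injOn_of_norm_fderiv_sub_le {f : E → E} {s : Set E} (hs : Convex ℝ s)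
    (hf : ∀ x ∈ s, DifferentiableAt ℝ f x) (u : (E →L[ℝ] E)ˣ) {C : ℝ}
    (hfu : ∀ x ∈ s, ‖fderiv ℝ f x - u‖ ≤ C) (hC : C * ‖(↑u⁻¹ : E →L[ℝ] E)‖ < 1) :
    InjOn f s := by
  intro x hx y hy hxy
  have hmvt := hs.norm_image_sub_le_of_norm_fderiv_le' hf hfu hx hy
  rw [hxy, sub_self, zero_sub, norm_neg] at hmvt
  have hinv : ‖y - x‖ ≤ ‖(↑u⁻¹ : E →L[ℝ] E)‖ * ‖(u : E →L[ℝ] E) (y - x)‖ := by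
    calc ‖y - x‖ = ‖(↑u⁻¹ : E →L[ℝ] E) ((u : E →L[ℝ] E) (y - x))‖ := by
          rw [← mul_apply_eq_comp, u.inv_mul, one_apply_eq_self]
      _ ≤ _ := ContinuousLinearMap.le_opNorm _ _
  have hzero : ‖y - x‖ = 0 := by
    nlinarith [norm_nonneg (y - x), norm_nonneg (↑u⁻¹ : E →L[ℝ] E)]
  exact (sub_eq_zero.1 (norm_eq_zero.1 hzero)).symm

theorem isOpenEmbedding_domRestrict_of_injOn [CompleteSpace E] {f : E → E} {U : Set E}
    (hU : IsOpen U) (hf : ContDiffOn ℝ 1 f U) (hder : ∀ x ∈ U, IsUnit (fderiv ℝ f x))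
    (hinj : InjOn f U) : IsOpenEmbedding (U.domRestrict f) := by
  have hnhds : ∀ x ∈ U, map f (𝓝 x) = 𝓝 (f x) := by
    intro x hx
    obtain ⟨u, hu⟩ := hder x hx
    have hstrict : HasStrictFDerivAt f
        (ContinuousLinearEquiv.unitsEquiv ℝ E u : E →L[ℝ] E) x := by
      convert (hf.contDiffAt (hU.mem_nhds hx)).hasStrictFDerivAt one_ne_zero
      exact hu ▸ rfl
    exact hstrict.map_nhds_eq_of_equiv
  refine .of_continuous_injective_isOpenMap
    (continuousOn_iff_continuous_domRestrict.1 hf.continuousOn) hinj.injective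
    (IsOpenMap.of_nhds_le fun x => ?_)
  rw [show U.domRestrict f = f ∘ Subtype.val from rfl, ← map_map, map_nhds_subtype_val,
    hU.nhdsWithin_eq x.2, hnhds x x.2]
  rfl

theorem isEmbedding_domRestrict_of_eqOn_diff [CompleteSpace E] {f H : E → E} {U s K : Set E}
    (hU : IsOpen U) (hfinj : InjOn f U) (hfder : ∀ x ∈ U, IsUnit (fderiv ℝ f x))
    (hH : ContDiffOn ℝ 1 H U) (hK : IsClosed K) (hKs : K ⊆ s) (hs : Convex ℝ s) (hsU : s ⊆ U)
    (hHf : EqOn H f (U \ K)) (u : (E →L[ℝ] E)ˣ) {C : ℝ}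
    (hHu : ∀ x ∈ s, ‖fderiv ℝ H x - u‖ ≤ C) (hC : C * ‖(↑u⁻¹ : E →L[ℝ] E)‖ < 1)
    (hsep : ∀ x ∈ K, ∀ y ∈ U \ s, H x ≠ f y) :
    IsEmbedding (U.domRestrict H) ∧ ∀ x ∈ U, IsUnit (fderiv ℝ H x) := by
  have hder : ∀ x ∈ U, IsUnit (fderiv ℝ H x) := by
    intro x hx
    by_cases hxs : x ∈ s
    · exact u.isUnit_of_norm_sub_mul_lt
        ((mul_le_mul_of_nonneg_right (hHu x hxs) (norm_nonneg _)).trans_lt hC)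
    · have hHf' : H =ᶠ[𝓝 x] f :=
        eventuallyEq_of_mem ((hU.sdiff hK).mem_nhds ⟨hx, fun h => hxs (hKs h)⟩) hHf
      rw [hHf'.fderiv_eq (𝕜 := ℝ)]
      exact hfder x hx
  have hHs : InjOn H s := hs.injOn_of_norm_fderiv_sub_le
    (fun x hx => (hH.contDiffAt (hU.mem_nhds (hsU hx))).differentiableAt one_ne_zero) u hHu hC
  exact ⟨(isOpenEmbedding_domRestrict_of_injOn hU hH hder
    (injOn_of_eqOn_diff hfinj hHf hKs hHs hsep)).isEmbedding, hder⟩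

theorem exists_cutoff [FiniteDimensional ℝ E] {lam : ℝ} (h0 : 0 < lam) (h1 : lam < 1) :
    ∃ L : ℝ≥0, ∀ (x₀ : E) {r : ℝ}, 0 < r → ∃ χ : E → ℝ, ContDiff ℝ 1 χ ∧
      (∀ x, χ x ∈ Icc 0 1) ∧ EqOn χ 1 (closedBall x₀ (lam * r)) ∧ support χ ⊆ ball x₀ r ∧
      ∀ x, ‖fderiv ℝ χ x‖ ≤ L / r := by
  let B : ContDiffBump (0 : E) := ⟨lam, 1, h0, h1⟩
  obtain ⟨L, hL⟩ := B.contDiff.lipschitzWith_of_hasCompactSupport B.hasCompactSupport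
    (one_ne_zero (α := WithTop ℕ∞))
  refine ⟨L, fun x₀ r hr => ?_⟩
  have hnorm (x : E) : ‖r⁻¹ • (x - x₀)‖ = dist x x₀ / r := by
    rw [norm_smul, norm_inv, Real.norm_of_nonneg hr.le, dist_eq_norm, inv_mul_eq_div]
  refine ⟨fun x => B (r⁻¹ • (x - x₀)), B.contDiff.comp (by fun_prop),
    fun x => ⟨B.nonneg, B.le_one⟩, fun x hx => ?_, fun x hx => ?_, fun x => ?_⟩
  · apply B.one_of_mem_closedBall
    rw [mem_closedBall_zero_iff, hnorm, div_le_iff₀ hr]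
    exact hx
  · by_contra hxr
    refine hx (B.zero_of_le_dist ?_)
    rw [dist_zero_right, hnorm, le_div_iff₀ hr, one_mul]
    exact not_lt.1 hxr
  · have hlip :=
      hL.comp ((lipschitzWith_smul r⁻¹).comp (IsometryEquiv.subRight x₀).isometry.lipschitz)
    refine (norm_fderiv_le_of_lipschitz ℝ hlip).trans_eq ?_
    simp [div_eq_mul_inv, abs_of_pos hr]

theorem norm_fderiv_mul_norm_le {F : Type*} [NormedAddCommGroup F] {χ : E → ℝ} {e : E → F}
    {x₀ x : E} {r ε : ℝ} {L : ℝ≥0} (hr : 0 < r) (hε : 0 ≤ ε) (hχr : support χ ⊆ ball x₀ r)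
    (hdχ : ‖fderiv ℝ χ x‖ ≤ L / r) (he : dist x x₀ ≤ r → ‖e x‖ ≤ ε * r) :
    ‖fderiv ℝ χ x‖ * ‖e x‖ ≤ L * ε := by
  by_cases hxs : x ∈ tsupport χ
  · have hxr : dist x x₀ ≤ r :=
      closure_minimal (hχr.trans ball_subset_closedBall) isClosed_closedBall hxs
    calc ‖fderiv ℝ χ x‖ * ‖e x‖ ≤ (L / r) * (ε * r) :=
          mul_le_mul hdχ (he hxr) (norm_nonneg _) (by positivity)
      _ = L * ε := by field_simp
  · rw [notMem_support.1 fun h => hxs (support_fderiv_subset ℝ h), norm_zero, zero_mul]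
    positivity

theorem isEmbedding_domRestrict_blend [CompleteSpace E] {Φ g : E → E} {U : Set E}
    (hU : IsOpen U) (hΦ : ContDiffOn ℝ 1 Φ U) (hinj : InjOn Φ U)
    (hder : ∀ x ∈ U, IsUnit (fderiv ℝ Φ x)) (u : (E →L[ℝ] E)ˣ) (hg : ContDiff ℝ 1 g)
    (hgu : ∀ x, fderiv ℝ g x = u) {x₀ : E} (hgx₀ : g x₀ = Φ x₀) {ρ ε r : ℝ} {L : ℝ≥0}
    (hρU : ball x₀ ρ ⊆ U) (hΦρ : ∀ x ∈ ball x₀ ρ, ‖fderiv ℝ Φ x - u‖ ≤ ε)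
    (hC : (1 + L) * ε * ‖(↑u⁻¹ : E →L[ℝ] E)‖ < 1) (hr : 0 < r) (hrρ : r < ρ)
    (hsep : ∀ a ∈ closedBall x₀ r, ∀ b ∈ U \ ball x₀ ρ, ε * r < dist (Φ a) (Φ b))
    {χ : E → ℝ} (hχ : ContDiff ℝ 1 χ) (hχ01 : ∀ x, χ x ∈ Icc 0 1) (hχr : support χ ⊆ ball x₀ r)
    (hdχ : ∀ x, ‖fderiv ℝ χ x‖ ≤ L / r) :
    ContDiffOn ℝ 1 (blend Φ g χ) U ∧ IsEmbedding (U.domRestrict (blend Φ g χ)) ∧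
      ∀ x ∈ U, IsUnit (fderiv ℝ (blend Φ g χ) x) := by
  have hΦd : ∀ x ∈ ball x₀ ρ, DifferentiableAt ℝ Φ x := fun x hx =>
    (hΦ.contDiffAt (hU.mem_nhds (hρU hx))).differentiableAt one_ne_zero
  have hgd : Differentiable ℝ g := hg.differentiable one_ne_zero
  have hε : 0 ≤ ε := (norm_nonneg _).trans (hΦρ x₀ (mem_ball_self (hr.trans hrρ)))
  have herr : ∀ x ∈ ball x₀ ρ, ‖Φ x - g x‖ ≤ ε * dist x x₀ := by
    intro x hx
    have hmvt := (convex_ball x₀ ρ).norm_image_sub_le_of_norm_fderiv_le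
      (f := fun y => Φ y - g y) (fun y hy => (hΦd y hy).sub (hgd y))
      (fun y hy => by rw [fderiv_fun_sub (hΦd y hy) (hgd y), hgu]; exact hΦρ y hy)
      (mem_ball_self (hr.trans hrρ)) hx
    rwa [hgx₀, sub_self, sub_zero, ← dist_eq_norm x x₀] at hmvt
  have hH : ContDiffOn ℝ 1 (blend Φ g χ) U := hΦ.blend hg.contDiffOn hχ.contDiffOn
  refine ⟨hH, isEmbedding_domRestrict_of_eqOn_diff hU hinj hder hH isClosed_closedBall
    (closedBall_subset_ball hrρ) (convex_ball x₀ ρ) hρU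
    (fun x hx =>
      blend_of_eq_zero (notMem_support.1 fun h => hx.2 (ball_subset_closedBall (hχr h))))
    u (C := (1 + L) * ε) (fun x hx => ?_) hC (fun x hx y hy hxy => ?_)⟩
  · calc ‖fderiv ℝ (blend Φ g χ) x - u‖
        ≤ ‖fderiv ℝ Φ x - u‖ + ‖fderiv ℝ χ x‖ * ‖Φ x - g x‖ := by
          simpa only [hgu] using norm_fderiv_blend_sub_le (hΦd x hx) (hgd x)
            (hχ.differentiable one_ne_zero x) (hχ01 x)
      _ ≤ ε + L * ε := add_le_add (hΦρ x hx) <| norm_fderiv_mul_norm_le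
            (e := fun y => Φ y - g y) hr hε hχr (hdχ x) fun hxr =>
              (herr x hx).trans (mul_le_mul_of_nonneg_left hxr hε)
      _ = (1 + L) * ε := by ring
  · have hxρ : x ∈ ball x₀ ρ := closedBall_subset_ball hrρ hx
    have hclose : dist (Φ x) (Φ y) ≤ ε * r := by
      rw [← hxy, dist_comm, dist_eq_norm]
      exact (norm_blend_sub_le (hχ01 x)).trans ((herr x hxρ).trans (by gcongr; exact hx))
    exact (hsep x hx y hy).not_ge hclose

theorem exists_local_affine_replacement [FiniteDimensional ℝ E] {U : Set E} (hU : IsOpen U)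
    {Φ : E → E} (hΦ : ContDiffOn ℝ 1 Φ U) (hemb : IsEmbedding (U.domRestrict Φ))
    (hder : ∀ x ∈ U, IsUnit (fderiv ℝ Φ x)) {lam : ℝ} (hlam : lam ∈ Ioo 0 1) {x₀ : E}
    (hx₀ : x₀ ∈ U) :
    ∃ r₀ > 0, closedBall x₀ r₀ ⊆ U ∧ ∀ r ∈ Ioc 0 r₀, ∃ H : E → E,
      ContDiffOn ℝ 1 H U ∧ IsEmbedding (U.domRestrict H) ∧ (∀ x ∈ U, IsUnit (fderiv ℝ H x)) ∧
      (∀ x ∈ closedBall x₀ (lam * r), H x = Φ x₀ + fderiv ℝ Φ x₀ (x - x₀)) ∧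
      (∀ x ∈ U \ ball x₀ r, H x = Φ x) := by
  obtain ⟨u, hu⟩ := hder x₀ hx₀
  obtain ⟨L, hL⟩ := exists_cutoff (E := E) hlam.1 hlam.2
  set N := ‖(↑u⁻¹ : E →L[ℝ] E)‖
  set ε := ((1 + L) * (N + 1))⁻¹ with hε
  have hεpos : 0 < ε := by positivity
  have hC : (1 + L) * ε * N < 1 := by
    rw [hε, mul_inv, ← mul_assoc, mul_inv_cancel₀ (by positivity), one_mul,
      inv_mul_lt_one₀ (by positivity)]
    linarith
  have hcont : ContinuousAt (fderiv ℝ Φ) x₀ :=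
    (hΦ.continuousOn_fderiv_of_isOpen hU le_rfl).continuousAt (hU.mem_nhds hx₀)
  obtain ⟨ρ, hρ, hρU⟩ := eventually_nhds_iff_ball.1
    ((hU.eventually_mem hx₀).and (hcont.eventually (closedBall_mem_nhds _ hεpos)))
  have hhalf : closedBall x₀ (ρ / 2) ⊆ ball x₀ ρ := closedBall_subset_ball (half_lt_self hρ)
  obtain ⟨δ, hδ, hsep⟩ := exists_pos_le_dist_of_isEmbedding_domRestrict hemb
    (isCompact_closedBall x₀ (ρ / 2)) (fun x hx => (hρU x (hhalf hx)).1) isOpen_ball hhalf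
  refine ⟨min (ρ / 2) (δ / (2 * ε)), by positivity, ?_, fun r hr => ?_⟩
  · exact fun x hx => (hρU x (hhalf (closedBall_subset_closedBall (min_le_left _ _) hx))).1
  obtain ⟨χ, hχ, hχ01, hχ1, hχr, hdχ⟩ := hL x₀ hr.1
  have hrρ : r ≤ ρ / 2 := hr.2.trans (min_le_left _ _)
  have hεr : ε * r < δ := by
    have := hr.2.trans (min_le_right _ _)
    rw [le_div_iff₀ (by positivity)] at this
    linarith
  have hg : ∀ x, fderiv ℝ (fun y => Φ x₀ + (u : E →L[ℝ] E) (y - x₀)) x = u := fun x => by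
    simp [fderiv_sub_const]
  obtain ⟨hHΦ, hHemb, hHder⟩ := isEmbedding_domRestrict_blend hU hΦ
    (injOn_iff_injective.2 hemb.injective) hder u (by fun_prop) hg (by simp)
    (fun x hx => (hρU x hx).1) (fun x hx => hu ▸ mem_closedBall_iff_norm.1 (hρU x hx).2) hC hr.1
    (by linarith)
    (fun a ha b hb => hεr.trans_le (hsep a (closedBall_subset_closedBall hrρ ha) b hb))
    hχ hχ01 hχr hdχ
  refine ⟨_, hHΦ, hHemb, hHder, fun x hx => ?_,
    fun x hx => blend_of_eq_zero (notMem_support.1 fun h => hx.2 (hχr h))⟩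
  rw [blend_of_eq_one (hχ1 hx), hu]

end Calculus

/-- A `C¹` diffeomorphism can be locally replaced by its affine approximation:
for every `x₀ ∈ U` there is `r₀ > 0` such that for all `0 < r ≤ r₀` there is a `C¹`
diffeomorphism `H₁` of `U` equal to the affine map `x ↦ Φ(x₀) + DΦ(x₀)(x − x₀)` on
`B̄(x₀, λr)` and equal to `Φ` outside `B(x₀, r)`. -/
theorem stmt6 {n : ℕ} (U : Set (EuclideanSpace ℝ (Fin n))) (hU : IsOpen U)
    (Φ : EuclideanSpace ℝ (Fin n) → EuclideanSpace ℝ (Fin n))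
    (hC1 : ContDiffOn ℝ 1 Φ U)
    (hemb : Topology.IsEmbedding (U.restrict Φ))
    (hder : ∀ x ∈ U, IsUnit (fderiv ℝ Φ x))
    (lam : ℝ) (hlam : lam ∈ Set.Ioo (0 : ℝ) 1) :
    ∀ x₀ ∈ U, ∃ r₀ > (0 : ℝ), Metric.closedBall x₀ r₀ ⊆ U ∧
      ∀ r ∈ Set.Ioc (0 : ℝ) r₀,
        ∃ H₁ : EuclideanSpace ℝ (Fin n) → EuclideanSpace ℝ (Fin n),
          ContDiffOn ℝ 1 H₁ U ∧ Topology.IsEmbedding (U.restrict H₁) ∧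
          (∀ x ∈ U, IsUnit (fderiv ℝ H₁ x)) ∧
          (∀ x ∈ Metric.closedBall x₀ (lam * r),
            H₁ x = Φ x₀ + fderiv ℝ Φ x₀ (x - x₀)) ∧
          (∀ x ∈ U \ Metric.ball x₀ r, H₁ x = Φ x) := fun _ hx₀ =>
  exists_local_affine_replacement hU hC1 hemb hder hlam hx₀
end

section
/- Fix ℓ ∈ ℤ. Let 𝒱 be a finite family of closed axis-parallel cubes in ℝⁿ with pairwise disjoint interiors, each of side-length 2^{−ℓ}. Let 𝒲 be another finite family of closed axis-parallel cubes such that each W ∈ 𝒲 has side-length 2^{−k} for some integer k ≥ ℓ, and the total volume of the cubes in 𝒲 is at most the total volume of the cubes in 𝒱. Then for each W ∈ 𝒲 there exists a translated copy W̃ of W (same side-length) such that the cubes {W̃ : W ∈ 𝒲} have pairwise disjoint interiors and their union is contained in the union of the cubes of 𝒱. -/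
/-!
Induct on the number of dyadic levels. By volume, the cubes of full side `h` are at most as
many as the storage cubes, so each of them gets a storage cube of its own. The unused storage
cubes are halved into `2ⁿ` subcubes of side `h / 2` each, which together still have at least
the volume of the remaining, smaller cubes; these are packed into the subcubes by induction.
A cube inside the union of the unused storage cubes meets no interior of a used one, because
a closed cube is the closure of its interior.
-/

open MeasureTheory

/-- The closed axis-parallel cube in `ℝⁿ` with lower corner `c` and side-length `s`. -/
def cube {n : ℕ} (c : Fin n → ℝ) (s : ℝ) : Set (Fin n → ℝ) :=
  Set.Icc c (c + fun _ => s)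

open Function

section

variable {n : ℕ}

theorem cube_eq_pi (c : Fin n → ℝ) (s : ℝ) :
    cube c s = Set.univ.pi fun i => Set.Icc (c i) (c i + s) := by
  ext x
  simp [cube, Pi.le_def]

theorem interior_cube (c : Fin n → ℝ) (s : ℝ) :
    interior (cube c s) = Set.univ.pi fun i => Set.Ioo (c i) (c i + s) := by
  rw [cube_eq_pi, interior_pi_set Set.finite_univ]
  simp only [interior_Icc]

theorem closure_interior_cube (c : Fin n → ℝ) {s : ℝ} (hs : 0 < s) :
    closure (interior (cube c s)) = cube c s := by
  rw [interior_cube, closure_pi_set, cube_eq_pi]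
  simp only [closure_Ioo (lt_add_of_pos_right _ hs).ne]

theorem volume_cube (c : Fin n → ℝ) {s : ℝ} (hs : 0 ≤ s) :
    volume (cube c s) = ENNReal.ofReal (s ^ n) := by
  rw [cube_eq_pi, volume_pi_pi]
  simp [Real.volume_Icc, ENNReal.ofReal_pow hs]

theorem cube_subset_cube {c c' : Fin n → ℝ} {s s' : ℝ} (h : c' ≤ c)
    (h' : ∀ i, c i + s ≤ c' i + s') : cube c s ⊆ cube c' s' := by
  simp only [cube_eq_pi]
  exact Set.pi_mono fun i _ => Set.Icc_subset_Icc (h i) (h' i)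

theorem disjoint_interior_cube_of_le {c c' : Fin n → ℝ} {s s' : ℝ} (i : Fin n)
    (h : c i + s ≤ c' i) : Disjoint (interior (cube c s)) (interior (cube c' s')) := by
  simp only [interior_cube, Set.disjoint_left, Set.mem_univ_pi, Set.mem_Ioo]
  intro x hx hx'
  linarith [hx i, hx' i]

theorem disjoint_interior_of_subset_iUnion_cube {ι : Type*} {A C : Set (Fin n → ℝ)}
    {v : ι → Fin n → ℝ} {h : ℝ} (hh : 0 < h) (hA : ∀ i, Disjoint A (interior (cube (v i) h)))
    (hC : C ⊆ ⋃ i, cube (v i) h) (hA_open : IsOpen A) : Disjoint A (interior C) := by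
  refine Disjoint.mono_right (interior_subset.trans hC) (Set.disjoint_iUnion_right.mpr fun i => ?_)
  rw [← closure_interior_cube (v i) hh]
  exact (hA i).closure_right hA_open

noncomputable def subcubeCorner (c : Fin n → ℝ) (h : ℝ) (b : Fin n → Fin 2) : Fin n → ℝ :=
  c + fun i => ((b i : ℕ) : ℝ) * (h / 2)

theorem cube_subcubeCorner_subset (c : Fin n → ℝ) {h : ℝ} (hh : 0 ≤ h) (b : Fin n → Fin 2) :
    cube (subcubeCorner c h b) (h / 2) ⊆ cube c h := by
  have hb : ∀ i, ((b i : ℕ) : ℝ) ≤ 1 := fun i => by exact_mod_cast Nat.le_of_lt_succ (b i).isLt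
  refine cube_subset_cube (fun i => ?_) (fun i => ?_) <;> simp only [subcubeCorner, Pi.add_apply]
  · have : 0 ≤ ((b i : ℕ) : ℝ) * (h / 2) := by positivity
    linarith
  · nlinarith [hb i]

theorem card_prod_subcubes_mul_half_pow (α : Type*) [Fintype α] (h : ℝ) :
    (Fintype.card (α × (Fin n → Fin 2)) : ℝ) * (h / 2) ^ n = Fintype.card α * h ^ n := by
  rw [Fintype.card_prod, Fintype.card_fun, Fintype.card_fin, Fintype.card_fin, div_pow]
  push_cast
  field_simp

theorem pairwise_disjoint_interior_cube_subcubeCorner {ι : Type*} {v : ι → Fin n → ℝ} {h : ℝ}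
    (hh : 0 ≤ h) (hv : Pairwise (Disjoint on fun i => interior (cube (v i) h))) :
    Pairwise (Disjoint on fun p : ι × (Fin n → Fin 2) =>
      interior (cube (subcubeCorner (v p.1) h p.2) (h / 2))) := by
  rintro ⟨i, b⟩ ⟨i', b'⟩ hne
  by_cases hi : i = i'
  · subst hi
    obtain ⟨k, hk⟩ : ∃ k, b k ≠ b' k := ne_iff.mp fun hb => hne (by rw [hb])
    have key : ∀ b b' : Fin n → Fin 2, b k = 0 → b' k = 1 →
        Disjoint (interior (cube (subcubeCorner (v i) h b) (h / 2)))
          (interior (cube (subcubeCorner (v i) h b') (h / 2))) := fun b b' hb hb' =>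
      disjoint_interior_cube_of_le k (by simp [subcubeCorner, hb, hb'])
    have : (b k = 0 ∧ b' k = 1) ∨ (b k = 1 ∧ b' k = 0) := by omega
    rcases this with ⟨hb, hb'⟩ | ⟨hb, hb'⟩
    · exact key b b' hb hb'
    · exact (key b' b hb' hb).symm
  · exact (hv hi).mono (interior_mono (cube_subcubeCorner_subset _ hh b))
      (interior_mono (cube_subcubeCorner_subset _ hh b'))

open Classical in
theorem exists_embedding_of_sum_pow_le {ι κ : Type*} [Fintype ι] [Fintype κ] {s : κ → ℝ} {h : ℝ}
    (hh : 0 < h) (hs : ∀ j, 0 ≤ s j) (hvol : ∑ j, s j ^ n ≤ Fintype.card ι * h ^ n) :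
    ∃ f : {j // s j = h} ↪ ι,
      ∑ j : {j // s j ≠ h}, s j ^ n ≤ Fintype.card {i // i ∉ Set.range f} * h ^ n := by
  have hsplit := Fintype.sum_subtype_add_sum_subtype (fun j => s j = h) (fun j => s j ^ n)
  have hfull : ∑ j : {j // s j = h}, s j ^ n = Fintype.card {j // s j = h} * h ^ n := by
    simp [Finset.sum_congr rfl fun (j : {j // s j = h}) _ => congrArg (· ^ n) j.2]
  have hrest : 0 ≤ ∑ j : {j // s j ≠ h}, s j ^ n :=
    Finset.sum_nonneg fun j _ => pow_nonneg (hs j) n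
  have hcard : Fintype.card {j // s j = h} ≤ Fintype.card ι := by
    have : (Fintype.card {j // s j = h} : ℝ) * h ^ n ≤ Fintype.card ι * h ^ n := by linarith
    exact_mod_cast le_of_mul_le_mul_right this (pow_pos hh n)
  obtain ⟨f⟩ := Function.Embedding.nonempty_of_card_le hcard
  refine ⟨f, ?_⟩
  rw [Fintype.card_subtype_compl, Fintype.card_range, Nat.cast_sub hcard]
  linarith

theorem pairwise_disjoint_interior_cube_dite {κ : Type*} {p : κ → Prop} [DecidablePred p]
    (s : κ → ℝ) (t₀ : {j // p j} → Fin n → ℝ) (t₁ : {j // ¬p j} → Fin n → ℝ)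
    (h₀ : Pairwise (Disjoint on fun j : {j // p j} => interior (cube (t₀ j) (s j))))
    (h₁ : Pairwise (Disjoint on fun j : {j // ¬p j} => interior (cube (t₁ j) (s j))))
    (h₀₁ : ∀ j₀ j₁, Disjoint (interior (cube (t₀ j₀) (s j₀))) (interior (cube (t₁ j₁) (s j₁)))) :
    Pairwise (Disjoint on fun j =>
      interior (cube (if hj : p j then t₀ ⟨j, hj⟩ else t₁ ⟨j, hj⟩) (s j))) := by
  intro j j' hne
  by_cases hj : p j <;> by_cases hj' : p j' <;> simp only [onFun, hj, hj', dif_pos]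
  · exact h₀ (Subtype.coe_ne_coe.mp hne)
  · exact h₀₁ ⟨j, hj⟩ ⟨j', hj'⟩
  · exact (h₀₁ ⟨j', hj'⟩ ⟨j, hj⟩).symm
  · exact h₁ (Subtype.coe_ne_coe.mp hne)

theorem exists_packing_of_lt {ι κ : Type*} [Fintype ι] [Fintype κ] (E : ℕ) {h : ℝ} (hh : 0 < h)
    (v : ι → Fin n → ℝ) (s : κ → ℝ) (hv : Pairwise (Disjoint on fun i => interior (cube (v i) h)))
    (hs : ∀ j, ∃ k < E, s j = h / 2 ^ k) (hvol : ∑ j, s j ^ n ≤ Fintype.card ι * h ^ n) :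
    ∃ t : κ → Fin n → ℝ, Pairwise (Disjoint on fun j => interior (cube (t j) (s j))) ∧
      ⋃ j, cube (t j) (s j) ⊆ ⋃ i, cube (v i) h := by
  induction E generalizing h ι κ with
  | zero =>
    have : IsEmpty κ := ⟨fun j => by simpa using hs j⟩
    exact ⟨0, fun j => isEmptyElim j, by simp⟩
  | succ E ih =>
    classical
    obtain ⟨f, hvol₁⟩ := exists_embedding_of_sum_pow_le hh
      (fun j => by obtain ⟨k, -, hk⟩ := hs j; rw [hk]; positivity) hvol
    let v₁ : {i // i ∉ Set.range f} × (Fin n → Fin 2) → Fin n → ℝ :=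
      fun p => subcubeCorner (v p.1) h p.2
    have hv₁ : Pairwise (Disjoint on fun p => interior (cube (v₁ p) (h / 2))) :=
      pairwise_disjoint_interior_cube_subcubeCorner hh.le
        (hv.comp_of_injective Subtype.val_injective)
    have hs₁ : ∀ j : {j // s j ≠ h}, ∃ k < E, s j = h / 2 / 2 ^ k := by
      rintro ⟨j, hj⟩
      obtain ⟨_ | k, hk, hsj⟩ := hs j
      · simp [hsj] at hj
      · exact ⟨k, by omega, by rw [hsj, pow_succ', div_div]⟩
    obtain ⟨t₁, ht₁, ht₁_sub⟩ := ih (half_pos hh) v₁ (fun j : {j // s j ≠ h} => s j) hv₁ hs₁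
      (by rwa [card_prod_subcubes_mul_half_pow])
    have hsub₁ : ⋃ j, cube (t₁ j) (s j) ⊆ ⋃ i : {i // i ∉ Set.range f}, cube (v i) h :=
      ht₁_sub.trans <| Set.iUnion_subset fun p =>
        (cube_subcubeCorner_subset _ hh.le p.2).trans (Set.subset_iUnion_of_subset p.1 le_rfl)
    refine ⟨fun j => if hj : s j = h then v (f ⟨j, hj⟩) else t₁ ⟨j, hj⟩, ?_, ?_⟩
    · refine pairwise_disjoint_interior_cube_dite (p := fun j => s j = h) s (fun j => v (f j)) t₁
        (fun j j' hne => ?_) ht₁ fun j₀ j₁ => ?_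
      · simpa only [onFun, j.2, j'.2] using hv (f.injective.ne hne)
      · rw [j₀.2]
        exact disjoint_interior_of_subset_iUnion_cube hh (fun i => hv fun hi => i.2 ⟨j₀, hi⟩)
          ((Set.subset_iUnion _ j₁).trans hsub₁) isOpen_interior
    · refine Set.iUnion_subset fun j => ?_
      dsimp only
      split_ifs with hj
      · rw [hj]
        exact Set.subset_iUnion (fun i => cube (v i) h) _
      · exact ((Set.subset_iUnion _ ⟨j, hj⟩).trans hsub₁).trans
          (Set.iUnion_subset fun i => Set.subset_iUnion (fun i => cube (v i) h) i.1)

theorem exists_packing {ι κ : Type*} [Fintype ι] [Fintype κ] {h : ℝ} (hh : 0 < h)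
    (v : ι → Fin n → ℝ) (s : κ → ℝ) (hv : Pairwise (Disjoint on fun i => interior (cube (v i) h)))
    (hs : ∀ j, ∃ k : ℕ, s j = h / 2 ^ k) (hvol : ∑ j, s j ^ n ≤ Fintype.card ι * h ^ n) :
    ∃ t : κ → Fin n → ℝ, Pairwise (Disjoint on fun j => interior (cube (t j) (s j))) ∧
      ⋃ j, cube (t j) (s j) ⊆ ⋃ i, cube (v i) h := by
  choose k hk using hs
  exact exists_packing_of_lt (Finset.univ.sup k + 1) hh v s hv
    (fun j => ⟨k j, Nat.lt_succ_of_le (Finset.le_sup (Finset.mem_univ j)), hk j⟩) hvol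

theorem sum_pow_le_of_sum_volume_cube_le {ι κ : Type*} [Fintype ι] [Fintype κ]
    {v : ι → Fin n → ℝ} {w : κ → Fin n → ℝ} {s : κ → ℝ} {h : ℝ} (hh : 0 ≤ h) (hs : ∀ j, 0 ≤ s j)
    (hvol : ∑ j, volume (cube (w j) (s j)) ≤ ∑ i, volume (cube (v i) h)) :
    ∑ j, s j ^ n ≤ Fintype.card ι * h ^ n := by
  simp only [volume_cube _ (hs _), volume_cube _ hh,
    ← ENNReal.ofReal_sum_of_nonneg fun j _ => pow_nonneg (hs j) n, Finset.sum_const,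
    Finset.card_univ, nsmul_eq_mul, ← ENNReal.ofReal_natCast,
    ← ENNReal.ofReal_mul (Nat.cast_nonneg _)] at hvol
  exact (ENNReal.ofReal_le_ofReal_iff (by positivity)).mp hvol

end

/-- Storage lemma: dyadic boxes of side-lengths `2^{-k}`, `k ≥ ℓ`, of total volume at most
that of a finite family of storage cubes of side `2^{-ℓ}` with pairwise disjoint interiors,
can be translated so as to have pairwise disjoint interiors and fit inside the storage. -/
theorem stmt9 {n : ℕ} (ℓ : ℤ) {ι κ : Type*} [Fintype ι] [Fintype κ]
    (v : ι → (Fin n → ℝ)) (w : κ → (Fin n → ℝ)) (s : κ → ℝ)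
    (hdisj : Pairwise fun i i' =>
      Disjoint (interior (cube (v i) ((2 : ℝ) ^ (-ℓ))))
        (interior (cube (v i') ((2 : ℝ) ^ (-ℓ)))))
    (hs : ∀ j, ∃ k : ℤ, ℓ ≤ k ∧ s j = (2 : ℝ) ^ (-k))
    (hvol : ∑ j, volume (cube (w j) (s j)) ≤ ∑ i, volume (cube (v i) ((2 : ℝ) ^ (-ℓ)))) :
    ∃ t : κ → (Fin n → ℝ),
      (Pairwise fun j j' =>
        Disjoint (interior (cube (t j) (s j))) (interior (cube (t j') (s j')))) ∧
      (⋃ j, cube (t j) (s j)) ⊆ ⋃ i, cube (v i) ((2 : ℝ) ^ (-ℓ)) := by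
  have hs_dyadic : ∀ j, ∃ k : ℕ, s j = (2 : ℝ) ^ (-ℓ) / 2 ^ k := fun j => by
    obtain ⟨k, hkℓ, hsk⟩ := hs j
    refine ⟨(k - ℓ).toNat, ?_⟩
    rw [hsk, ← zpow_natCast, Int.toNat_of_nonneg (by omega), ← zpow_sub₀ two_ne_zero]
    ring_nf
  have hs_nonneg : ∀ j, 0 ≤ s j := fun j => by
    obtain ⟨k, hk⟩ := hs_dyadic j
    rw [hk]
    positivity
  exact exists_packing (by positivity) v s hdisj hs_dyadic
    (sum_pow_le_of_sum_volume_cube_le (by positivity) hs_nonneg hvol)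
end

section
/- Let Φ : 𝒬 → 𝒬 be a C¹ diffeomorphism of the closed unit cube onto itself with Φ = id in a neighborhood of ∂𝒬. Then there is a sequence of C^∞ diffeomorphisms Φ_k : 𝒬 → 𝒬, each equal to the identity in a neighborhood of ∂𝒬, converging to Φ in the uniform metric d(Φ,Ψ) = ‖Φ−Ψ‖_∞ + ‖Φ⁻¹−Ψ⁻¹‖_∞. -/
/-!
Extend `Φ` by the identity outside the cube to a `C¹` map `W` of the whole space; it is injective,
has invertible derivative and differs from the identity only on a compact subset of the open cube.
By the inverse function theorem `W` is a global `C¹` diffeomorphism, and its inverse, a compactly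
supported perturbation of the identity, is Lipschitz: `W` is `K`-antilipschitz. Mollifying `W - id`
gives smooth `F = id + h` with `F - W` uniformly small and `ε`-Lipschitz; for `ε < 1 / K` the map
`F` is still antilipschitz, hence injective with invertible derivative, hence a smooth
diffeomorphism. Finally `‖F⁻¹ y - W⁻¹ y‖ ≤ K ‖W (F⁻¹ y) - F (F⁻¹ y)‖ ≤ K ε`.
-/

open Set Function Metric MeasureTheory Filter
open scoped Convolution Topology Pointwise NNReal ContDiff

theorem eq_of_notMem_tsupport_sub_id {α : Type*} [TopologicalSpace α] [AddGroup α] {f : α → α}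
    {x : α} (hx : x ∉ tsupport (f - id)) : f x = x :=
  sub_eq_zero.1 (image_eq_zero_of_notMem_tsupport hx : (f - (id : α → α)) x = 0)

theorem isClosed_range_of_hasCompactSupport_sub_id {α : Type*} [TopologicalSpace α] [T2Space α]
    [AddGroup α] {f : α → α} (hf : Continuous f)
    (hfc : HasCompactSupport (f - id)) : IsClosed (range f) := by
  have hfix : closure (tsupport (f - id))ᶜ ⊆ {x | f x = x} :=
    closure_minimal (fun x hx => eq_of_notMem_tsupport_sub_id hx)
      (isClosed_eq hf continuous_id)
  have hrange : range f = f '' tsupport (f - id) ∪ (tsupport (f - id))ᶜ := by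
    refine (range_subset_iff.2 fun x => ?_).antisymm
      (union_subset (image_subset_range _ _) fun x hx => ⟨x, eq_of_notMem_tsupport_sub_id hx⟩)
    by_cases hx : x ∈ tsupport (f - id)
    · exact Or.inl (mem_image_of_mem f hx)
    · exact Or.inr (by rwa [eq_of_notMem_tsupport_sub_id hx])
  rw [← closure_subset_iff_isClosed, hrange, closure_union,
    (hfc.image hf).isClosed.closure_eq, ← hrange]
  exact union_subset (image_subset_range _ _) fun x hx => ⟨x, hfix hx⟩

theorem Equiv.bijOn_of_tsupport_sub_id_subset {α : Type*} [TopologicalSpace α] [AddGroup α]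
    (e : α ≃ α) {s : Set α} (hs : tsupport (⇑e - id) ⊆ s) : BijOn e s s := by
  have hcompl : BijOn e sᶜ sᶜ :=
    (bijOn_id sᶜ).congr fun x hx => (eq_of_notMem_tsupport_sub_id fun h => hx (hs h)).symm
  simpa only [compl_compl] using hcompl.compl e.bijective

theorem exists_isOpen_frontier_subset_of_tsupport_sub_id_subset {α : Type*} [TopologicalSpace α]
    [AddGroup α] {f : α → α} {s : Set α} (hf : tsupport (f - id) ⊆ interior s) :
    ∃ V, IsOpen V ∧ frontier s ⊆ V ∧ ∀ x ∈ V, f x = x :=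
  ⟨(tsupport (f - id))ᶜ, (isClosed_tsupport _).isOpen_compl, fun _ hx hxf => hx.2 (hf hxf),
    fun _ hx => eq_of_notMem_tsupport_sub_id hx⟩

theorem Set.BijOn.injective_piecewise_id {α : Type*} {s : Set α} [DecidablePred (· ∈ s)]
    {f : α → α} (hf : BijOn f s s) : Injective (s.piecewise f id) :=
  (injective_piecewise_iff s).2 ⟨hf.injOn, injOn_id _, fun x hx y hy hxy =>
    hy (by rw [← id_eq y, ← hxy]; exact hf.mapsTo hx)⟩

section Extension

variable {X : Type*} [TopologicalSpace X] {Q V : Set X} [DecidablePred (· ∈ Q)] {Φ : X → X}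

theorem eventuallyEq_piecewise_id (hQ : IsClosed Q) (hV : IsOpen V) (hQV : frontier Q ⊆ V)
    (hΦ : EqOn Φ id V) (x : X) :
    x ∈ interior Q ∧ Q.piecewise Φ id =ᶠ[𝓝 x] Φ ∨ Q.piecewise Φ id =ᶠ[𝓝 x] id := by
  by_cases hx : x ∈ interior Q
  · exact Or.inl ⟨hx, mem_of_superset (isOpen_interior.mem_nhds hx) fun y hy =>
      piecewise_eq_of_mem _ _ _ (interior_subset hy)⟩
  · refine Or.inr (mem_of_superset ((hV.union hQ.isOpen_compl).mem_nhds ?_) ?_)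
    · by_cases hxQ : x ∈ Q
      · exact Or.inl (hQV (hQ.frontier_eq ▸ ⟨hxQ, hx⟩))
      · exact Or.inr hxQ
    · rintro y (hy | hy)
      · by_cases hyQ : y ∈ Q
        · simp only [mem_ofPred_eq, piecewise_eq_of_mem _ _ _ hyQ, hΦ hy]
        · simp only [mem_ofPred_eq, piecewise_eq_of_notMem _ _ _ hyQ]
      · simp only [mem_ofPred_eq, piecewise_eq_of_notMem _ _ _ hy]

theorem tsupport_piecewise_sub_id_subset [AddGroup X] (hQ : IsClosed Q) (hV : IsOpen V)
    (hQV : frontier Q ⊆ V) (hΦ : EqOn Φ id V) : tsupport (Q.piecewise Φ id - id) ⊆ interior Q := by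
  intro x hx
  by_contra hxQ
  refine notMem_tsupport_iff_eventuallyEq.2 ?_ hx
  filter_upwards [(eventuallyEq_piecewise_id hQ hV hQV hΦ x).resolve_left (hxQ ·.1)] with y hy
  exact sub_eq_zero.2 hy

end Extension

section Smooth

variable {E : Type*} [NormedAddCommGroup E] [NormedSpace ℝ E]

theorem contDiff_piecewise_id {Q V U : Set E} [DecidablePred (· ∈ Q)] {Φ : E → E}
    {k : WithTop ℕ∞} (hQ : IsClosed Q) (hV : IsOpen V) (hQV : frontier Q ⊆ V) (hΦ : EqOn Φ id V)
    (hU : IsOpen U) (hQU : Q ⊆ U) (hΦU : ContDiffOn ℝ k Φ U) : ContDiff ℝ k (Q.piecewise Φ id) :=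
  contDiff_iff_contDiffAt.2 fun x => (eventuallyEq_piecewise_id hQ hV hQV hΦ x).elim
    (fun ⟨hx, h⟩ =>
      (hΦU.contDiffAt (hU.mem_nhds (hQU (interior_subset hx)))).congr_of_eventuallyEq h)
    contDiffAt_id.congr_of_eventuallyEq

theorem isUnit_fderiv_piecewise_id {Q V : Set E} [DecidablePred (· ∈ Q)] {Φ : E → E}
    (hQ : IsClosed Q) (hV : IsOpen V) (hQV : frontier Q ⊆ V) (hΦ : EqOn Φ id V)
    (hΦunit : ∀ x ∈ Q, IsUnit (fderiv ℝ Φ x)) (x : E) :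
    IsUnit (fderiv ℝ (Q.piecewise Φ id) x) := by
  rcases eventuallyEq_piecewise_id hQ hV hQV hΦ x with ⟨hx, h⟩ | h
  · rw [h.fderiv_eq]
    exact hΦunit x (interior_subset hx)
  · rw [h.fderiv_eq, fderiv_id, ← ContinuousLinearMap.one_def]
    exact isUnit_one

theorem HasFDerivAt.norm_le_mul_norm_of_antilipschitz {F : Type*} [NormedAddCommGroup F]
    [NormedSpace ℝ F] {f : E → F} {f' : E →L[ℝ] F} {x : E}
    (hf : HasFDerivAt f f' x) {K : ℝ≥0} (hK : AntilipschitzWith K f) (v : E) :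
    ‖v‖ ≤ K * ‖f' v‖ := by
  have hlim : Tendsto (fun c : ℝ => K * ‖c • (f (x + c⁻¹ • v) - f x)‖) atTop (𝓝 (K * ‖f' v‖)) :=
    ((hf.lim v tendsto_norm_atTop_atTop).norm).const_mul _
  refine ge_of_tendsto hlim ((eventually_gt_atTop 0).mono fun c hc => ?_)
  have := hK.le_mul_dist (x + c⁻¹ • v) x
  rw [dist_eq_norm, dist_eq_norm, add_sub_cancel_left, norm_smul, norm_inv,
    Real.norm_of_nonneg hc.le] at this
  rw [norm_smul, Real.norm_of_nonneg hc.le, mul_left_comm]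
  calc ‖v‖ = c * (c⁻¹ * ‖v‖) := by field_simp
    _ ≤ c * (K * ‖f (x + c⁻¹ • v) - f x‖) := by gcongr

variable [CompleteSpace E]

theorem ContDiff.exists_homeomorph_of_injective {f : E → E} {k : WithTop ℕ∞}
    (hf : ContDiff ℝ k f) (hk : k ≠ 0) (hunit : ∀ x, IsUnit (fderiv ℝ f x))
    (hfc : HasCompactSupport (f - id)) (hinj : Injective f) :
    ∃ e : E ≃ₜ E, ⇑e = f ∧ ContDiff ℝ k e.symm := by
  let f' : E → E ≃L[ℝ] E := fun x => ContinuousLinearEquiv.unitsEquiv ℝ E (hunit x).unit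
  have hf' : ∀ x, HasStrictFDerivAt f (f' x : E →L[ℝ] E) x := fun x => by
    have : (f' x : E →L[ℝ] E) = fderiv ℝ f x := (hunit x).unit_spec
    rw [this]
    exact hf.contDiffAt.hasStrictFDerivAt hk
  have hopen : IsOpenMap f := isOpenMap_of_hasStrictFDerivAt_equiv hf'
  have hsurj : Surjective f := range_eq_univ.1 <|
    IsClopen.eq_univ ⟨isClosed_range_of_hasCompactSupport_sub_id hf.continuous hfc,
      hopen.isOpen_range⟩ (range_nonempty f)
  let e := (Equiv.ofBijective f ⟨hinj, hsurj⟩).toHomeomorphOfContinuousOpen hf.continuous hopen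
  exact ⟨e, rfl, e.contDiff_symm (fun x => (hf' x).hasFDerivAt) hf⟩

theorem ContDiff.exists_antilipschitzWith_of_injective {f : E → E} {k : WithTop ℕ∞}
    (hf : ContDiff ℝ k f) (hk : k ≠ 0) (hunit : ∀ x, IsUnit (fderiv ℝ f x))
    (hfc : HasCompactSupport (f - id)) (hinj : Injective f) :
    ∃ K, 0 < K ∧ AntilipschitzWith K f := by
  obtain ⟨e, rfl, he⟩ := hf.exists_homeomorph_of_injective hk hunit hfc hinj
  have hsupp : HasCompactSupport (⇑e.symm - id) := hfc.mono fun y hy hey => hy <| by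
    rw [Pi.sub_apply, sub_eq_zero] at hey
    rw [Pi.sub_apply, sub_eq_zero, e.symm_apply_eq, id, hey, id]
  obtain ⟨C, hC⟩ := (he.sub contDiff_id).lipschitzWith_of_hasCompactSupport hsupp hk
  have : LipschitzWith (1 + C) e.symm := by
    simpa using LipschitzWith.id.add hC
  exact ⟨1 + C, add_pos_of_pos_of_nonneg one_pos C.2, this.to_rightInverse e.symm_apply_apply⟩

end Smooth

section FiniteDimensional

variable {E : Type*} [NormedAddCommGroup E] [NormedSpace ℝ E] [FiniteDimensional ℝ E]

theorem HasFDerivAt.isUnit_of_antilipschitz {f : E → E} {f' : E →L[ℝ] E} {x : E}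
    (hf : HasFDerivAt f f' x) {K : ℝ≥0} (hK : AntilipschitzWith K f) :
    IsUnit f' := by
  have hinj : Injective f' := by
    refine (injective_iff_map_eq_zero _).2 fun v hv => norm_le_zero_iff.1 ?_
    simpa [hv] using hf.norm_le_mul_norm_of_antilipschitz hK v
  exact ContinuousLinearMap.isUnit_iff_bijective.2
    ⟨hinj, (LinearMap.injective_iff_surjective (f := (f' : E →ₗ[ℝ] E))).1 hinj⟩

theorem ContDiff.exists_homeomorph_of_antilipschitz {f : E → E} {k : WithTop ℕ∞}
    (hf : ContDiff ℝ k f) (hk : k ≠ 0) (hfc : HasCompactSupport (f - id)) {K : ℝ≥0}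
    (hK : AntilipschitzWith K f) : ∃ e : E ≃ₜ E, ⇑e = f ∧ ContDiff ℝ k e.symm :=
  hf.exists_homeomorph_of_injective hk
    (fun x => ((hf.differentiable hk) x).hasFDerivAt.isUnit_of_antilipschitz hK) hfc hK.injective

theorem HasCompactSupport.exists_contDiff_dist_le_and_dist_fderiv_le {G : Type*}
    [NormedAddCommGroup G] [NormedSpace ℝ G] [CompleteSpace G] {g : E → G}
    (hgc : HasCompactSupport g) (hg : ContDiff ℝ 1 g) {S : Set E} (hS : IsOpen S)
    (hgS : tsupport g ⊆ S) {η : ℝ} (hη : 0 < η) :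
    ∃ h : E → G, ContDiff ℝ ∞ h ∧ HasCompactSupport h ∧ tsupport h ⊆ S ∧
      (∀ x, dist (h x) (g x) ≤ η) ∧
      ∀ x, dist (fderiv ℝ h x) (fderiv ℝ g x) ≤ η := by
  borelize E
  obtain ⟨ε₀, hε₀, hε₀S⟩ := hgc.exists_thickening_subset_open hS hgS
  obtain ⟨δ₀, hδ₀, hg_uc⟩ := Metric.uniformContinuous_iff.1
    (hgc.uniformContinuous_of_continuous hg.continuous) η hη
  obtain ⟨δ₁, hδ₁, hg'_uc⟩ := Metric.uniformContinuous_iff.1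
    ((hgc.fderiv ℝ).uniformContinuous_of_continuous (hg.continuous_fderiv one_ne_zero)) η hη
  set ε := min (ε₀ / 2) (min δ₀ δ₁)
  have hε : 0 < ε := lt_min (half_pos hε₀) (lt_min hδ₀ hδ₁)
  let φ : ContDiffBump (0 : E) := ⟨ε / 2, ε, half_pos hε, half_lt_self hε⟩
  let μ : Measure E := .addHaar
  set h := φ.normed μ ⋆[ContinuousLinearMap.lsmul ℝ ℝ, μ] g
  have hsupp : tsupport h ⊆ cthickening ε (tsupport g) := by
    refine (closure_mono ((support_convolution_subset _).trans ?_)).trans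
      (closure_thickening_subset_cthickening _ _)
    rw [φ.support_normed_eq, ← ball_add_zero]
    exact add_subset_add_left (subset_tsupport g)
  refine ⟨h, φ.hasCompactSupport_normed.contDiff_convolution_left _ φ.contDiff_normed
      hg.continuous.locallyIntegrable,
    hgc.cthickening.of_isClosed_subset (isClosed_tsupport h) hsupp,
    hsupp.trans ((cthickening_subset_thickening' hε₀
      ((min_le_left _ _).trans_lt (half_lt_self hε₀)) _).trans hε₀S), fun x => ?_, fun x => ?_⟩
  · refine φ.dist_normed_convolution_le hg.continuous.aestronglyMeasurable fun y hy => ?_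
    exact (hg_uc ((mem_ball.1 hy).trans_le ((min_le_right _ _).trans (min_le_left _ _)))).le
  · have hL : (ContinuousLinearMap.lsmul ℝ ℝ).precompR E =
        (ContinuousLinearMap.lsmul ℝ ℝ : ℝ →L[ℝ] (E →L[ℝ] G) →L[ℝ] E →L[ℝ] G) := by
      ext; simp [ContinuousLinearMap.precompR_apply]
    rw [(hgc.hasFDerivAt_convolution_right _ φ.integrable_normed.locallyIntegrable hg x).fderiv,
      hL]
    refine φ.dist_normed_convolution_le
      (hg.continuous_fderiv one_ne_zero).aestronglyMeasurable fun y hy => ?_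
    exact (hg'_uc ((mem_ball.1 hy).trans_le ((min_le_right _ _).trans (min_le_right _ _)))).le

theorem exists_smooth_homeomorph_dist_le {W : E → E} (hW : ContDiff ℝ 1 W)
    (hunit : ∀ x, IsUnit (fderiv ℝ W x)) (hinj : Injective W)
    (hWc : HasCompactSupport (W - id)) {S : Set E} (hS : IsOpen S) (hWS : tsupport (W - id) ⊆ S)
    {η : ℝ} (hη : 0 < η) :
    ∃ e : E ≃ₜ E, ContDiff ℝ ∞ e ∧ ContDiff ℝ ∞ e.symm ∧ tsupport (⇑e - id) ⊆ S ∧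
      ∀ x, dist (e x) (W x) ≤ η ∧ dist (e.symm (W x)) x ≤ η := by
  obtain ⟨K, hK, hWK⟩ := hW.exists_antilipschitzWith_of_injective one_ne_zero hunit hWc hinj
  set ε : ℝ := min η 1 / (K + 1)
  have hε : 0 < ε := by positivity
  have hKε : K * ε + ε = min η 1 := by rw [← add_one_mul, mul_div_cancel₀ _ (by positivity)]
  have hKε_nonneg : 0 ≤ K * ε := by positivity
  have hεK : ε < K⁻¹ := by
    rw [NNReal.coe_inv, lt_inv_comm₀ hε (by positivity), ← one_div, lt_div_iff₀ hε]
    linarith [min_le_right η 1]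
  obtain ⟨h, hh, hhc, hhS, hh_dist, hh'_dist⟩ :=
    hWc.exists_contDiff_dist_le_and_dist_fderiv_le (hW.sub contDiff_id) hS hWS hε
  set F : E → E := fun x => x + h x
  have hFh : F - id = h := funext fun x => add_sub_cancel_left x (h x)
  have hFW : F - W = h - (W - id) := by ext x; simp [F]; abel
  have hFW_dist (y : E) : dist (F y) (W y) ≤ ε := by
    rw [dist_eq_norm, ← Pi.sub_apply F W, hFW, Pi.sub_apply, ← dist_eq_norm]
    exact hh_dist y
  have hFW_lip : LipschitzWith ε.toNNReal (F - W) := by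
    have hg : Differentiable ℝ (W - id) := (hW.sub contDiff_id).differentiable one_ne_zero
    have hh' : Differentiable ℝ h := hh.differentiable (by simp)
    rw [hFW]
    refine lipschitzWith_of_nnnorm_fderiv_le (hh'.sub hg) fun x => ?_
    rw [Real.le_toNNReal_iff_coe_le hε.le, coe_nnnorm, fderiv_sub (hh' x) (hg x), ← dist_eq_norm]
    exact hh'_dist x
  have hF : ContDiff ℝ ∞ F := contDiff_id.add hh
  obtain ⟨e, heF, he⟩ := hF.exists_homeomorph_of_antilipschitz (by simp) (hFh ▸ hhc)
    (hWK.add_sub_lipschitzWith hFW_lip ((Real.toNNReal_lt_iff_lt_coe hε.le).2 hεK))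
  refine ⟨e, heF ▸ hF, he, heF ▸ hFh ▸ hhS, fun x => ⟨?_, ?_⟩⟩
  · rw [heF]
    linarith [hFW_dist x, min_le_left η 1]
  · have hWa : W x = e (e.symm (W x)) := (e.apply_symm_apply _).symm
    calc dist (e.symm (W x)) x ≤ K * dist (W (e.symm (W x))) (W x) := hWK.le_mul_dist _ _
      _ = K * dist (F (e.symm (W x))) (W (e.symm (W x))) := by rw [dist_comm, ← heF, ← hWa]
      _ ≤ K * ε := by gcongr; exact hFW_dist _
      _ ≤ η := by linarith [min_le_left η 1]

end FiniteDimensional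

theorem isCompact_unitCube (ι : Type*) [Fintype ι] :
    IsCompact {x : EuclideanSpace ℝ ι | ∀ i, x i ∈ Icc (0 : ℝ) 1} := by
  have hcube : {x : EuclideanSpace ℝ ι | ∀ i, x i ∈ Icc (0 : ℝ) 1} =
      (EuclideanSpace.equiv ι ℝ).toHomeomorph ⁻¹' univ.pi fun _ => Icc 0 1 := by
    ext x
    simp [Pi.le_def, forall_and]
  rw [hcube, Homeomorph.isCompact_preimage]
  exact isCompact_univ_pi fun _ => isCompact_Icc

/-- A `C¹` diffeomorphism of the closed unit cube onto itself which is the identity near the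
boundary can be approximated in the uniform metric by `C^∞` diffeomorphisms which are the
identity near the boundary. -/
theorem stmt13 {n : ℕ} (Q : Set (EuclideanSpace ℝ (Fin (n + 2))))
    (hQ : Q = {x | ∀ i, x i ∈ Set.Icc (0 : ℝ) 1})
    (Φ Ψ : EuclideanSpace ℝ (Fin (n + 2)) → EuclideanSpace ℝ (Fin (n + 2)))
    (hbij : Set.BijOn Φ Q Q)
    (hinv : ∀ x ∈ Q, Ψ (Φ x) = x ∧ Φ (Ψ x) = x)
    (hC1 : ∃ U, IsOpen U ∧ Q ⊆ U ∧ ContDiffOn ℝ 1 Φ U ∧ Set.InjOn Φ U ∧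
      ∀ x ∈ U, IsUnit (fderiv ℝ Φ x))
    (hid : ∃ V, IsOpen V ∧ frontier Q ⊆ V ∧ Set.EqOn Φ id V) :
    ∃ Φk : ℕ → (EuclideanSpace ℝ (Fin (n + 2)) ≃ EuclideanSpace ℝ (Fin (n + 2))),
      (∀ k, ContDiff ℝ (⊤ : ℕ∞) ⇑(Φk k) ∧ ContDiff ℝ (⊤ : ℕ∞) ⇑(Φk k).symm ∧
        Set.BijOn (Φk k) Q Q ∧
        ∃ V, IsOpen V ∧ frontier Q ⊆ V ∧ ∀ x ∈ V, (Φk k) x = x) ∧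
      Filter.Tendsto
        (fun k => (⨆ x : Q, dist ((Φk k) x) (Φ x)) + ⨆ x : Q, dist ((Φk k).symm x) (Ψ x))
        Filter.atTop (nhds 0) := by
  classical
  obtain ⟨U, hU, hQU, hΦU, -, hΦunit⟩ := hC1
  obtain ⟨V, hV, hQV, hΦV⟩ := hid
  have hQc : IsCompact Q := hQ ▸ isCompact_unitCube _
  have hsupp : tsupport (Q.piecewise Φ id - id) ⊆ interior Q :=
    tsupport_piecewise_sub_id_subset hQc.isClosed hV hQV hΦV
  choose e he he' he_supp he_dist using fun k : ℕ => exists_smooth_homeomorph_dist_le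
    (contDiff_piecewise_id hQc.isClosed hV hQV hΦV hU hQU hΦU)
    (isUnit_fderiv_piecewise_id hQc.isClosed hV hQV hΦV fun x hx => hΦunit x (hQU hx))
    hbij.injective_piecewise_id
    (hQc.of_isClosed_subset (isClosed_tsupport _) (hsupp.trans interior_subset))
    isOpen_interior hsupp (Nat.one_div_pos_of_nat (n := k))
  refine ⟨fun k => (e k).toEquiv, fun k => ⟨he k, he' k,
    (e k).toEquiv.bijOn_of_tsupport_sub_id_subset ((he_supp k).trans interior_subset),
    exists_isOpen_frontier_subset_of_tsupport_sub_id_subset (he_supp k)⟩, ?_⟩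
  have hΦ_dist (k : ℕ) : ⨆ x : Q, dist (e k x) (Φ x) ≤ 1 / (k + 1) :=
    Real.iSup_le (fun x => piecewise_eq_of_mem Q Φ id x.2 ▸ (he_dist k x).1)
      Nat.one_div_pos_of_nat.le
  have hΨ_dist (k : ℕ) : ⨆ y : Q, dist ((e k).symm y) (Ψ y) ≤ 1 / (k + 1) := by
    refine Real.iSup_le (fun ⟨y, hy⟩ => ?_) Nat.one_div_pos_of_nat.le
    obtain ⟨x, hx, rfl⟩ := hbij.surjOn hy
    simpa only [(hinv x hx).1, piecewise_eq_of_mem Q Φ id hx] using (he_dist k x).2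
  refine squeeze_zero (fun k => add_nonneg (Real.iSup_nonneg fun _ => dist_nonneg)
    (Real.iSup_nonneg fun _ => dist_nonneg)) (fun k => add_le_add (hΦ_dist k) (hΨ_dist k)) ?_
  simpa using (tendsto_one_div_add_atTop_nhds_zero_nat (𝕜 := ℝ)).add
    (tendsto_one_div_add_atTop_nhds_zero_nat (𝕜 := ℝ))
end

section
/- Let U ⊂ ℝⁿ be open and Φ : U → ℝⁿ a homeomorphism onto its image that is approximately differentiable almost everywhere and satisfies the Lusin condition (N) (it maps sets of Lebesgue measure zero to sets of measure zero). Then Φ⁻¹ is approximately differentiable almost everywhere on Φ(U), and D_a Φ⁻¹(y) = (D_a Φ)⁻¹(Φ⁻¹(y)) for almost every y ∈ Φ(U). -/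
open MeasureTheory Filter Metric

/-- `x` is a Lebesgue density point of `E`. -/
def DensityPt {n : ℕ} (E : Set (EuclideanSpace ℝ (Fin n)))
    (x : EuclideanSpace ℝ (Fin n)) : Prop :=
  Tendsto (fun r => volume (E ∩ closedBall x r) / volume (closedBall x r))
    (nhdsWithin 0 (Set.Ioi 0)) (nhds 1)

/-- `f` is approximately differentiable at `x` with approximate derivative `L`. -/
def ApproxDiffAt {n : ℕ} {F : Type*} [NormedAddCommGroup F] [NormedSpace ℝ F]
    (f : EuclideanSpace ℝ (Fin n) → F) (L : EuclideanSpace ℝ (Fin n) →L[ℝ] F)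
    (x : EuclideanSpace ℝ (Fin n)) : Prop :=
  ∃ E : Set (EuclideanSpace ℝ (Fin n)), MeasurableSet E ∧ DensityPt E x ∧
    Tendsto (fun y => ‖f y - f x - L (y - x)‖ / ‖y - x‖)
      (nhdsWithin x (E \ {x})) (nhds 0)

/-!
Up to a null set, `U` is covered by countably many measurable pieces on which `Φ` is Lipschitz
(Federer): if `Φ` has approximate derivative `L` at `x` and `k > ‖L‖`, then at every small scale
most of the ball around `x` is moved by `Φ` at most `k` times as far from `Φ x`; two such points
`x, z` then share such a neighbor `w` with `|w - x| ≤ |x - z|`, whence `|Φ x - Φ z| ≤ 3k |x - z|`.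

On a piece `s`, Rademacher's theorem gives a derivative of `Φ` within `s` almost everywhere, and
Sard's lemma makes the image of the points where it is singular null. Condition (N) turns every
other exceptional set of `s` (non-differentiability, non-density points) into a null set of
images. At the remaining points the derivative `L` is invertible, so the inverse function has
derivative `L⁻¹` within `Φ '' s`; since `x` is a density point of `s` and `Φ x` one of `Φ '' s`,
these two sets witness the approximate differentiability of `Φ` and of `Ψ`.
-/

open MeasureTheory Filter Metric Set Topology Module
open scoped NNReal ENNReal

section Topology

variable {X Y : Type*}

theorem Topology.IsEmbedding.continuousOn_image_of_leftInvOn [TopologicalSpace X]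
    [TopologicalSpace Y] {U : Set X} {Φ : X → Y} {Ψ : Y → X} (hemb : IsEmbedding (U.domRestrict Φ))
    (hΨ : LeftInvOn Ψ Φ U) : ContinuousOn Ψ (Φ '' U) := by
  rintro _ ⟨x, hx, rfl⟩
  have hmap : map (U.domRestrict Φ) (𝓝 ⟨x, hx⟩) = 𝓝[Φ '' U] (Φ x) := by
    rw [hemb.map_nhds_eq, range_domRestrict]
    rfl
  have hΨΦ : Ψ ∘ U.domRestrict Φ = Subtype.val := funext fun a => hΨ a.2
  rw [ContinuousWithinAt, ← hmap, tendsto_map'_iff, hΨΦ, hΨ hx]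
  exact continuous_subtype_val.continuousAt

theorem LipschitzOnWith.closure_inter_of_continuousOn [PseudoEMetricSpace X]
    [PseudoEMetricSpace Y] {f : X → Y} {s U : Set X} {K : ℝ≥0} (hfs : LipschitzOnWith K f s)
    (hU : IsOpen U) (hf : ContinuousOn f U) : LipschitzOnWith K f (closure s ∩ U) := by
  have hlip : LipschitzOnWith K (U.domRestrict f) (closure (Subtype.val ⁻¹' s)) :=
    LipschitzOnWith.closure hf.domRestrict.continuousOn fun a ha b hb => hfs ha hb
  have hmem : ∀ {x} (hx : x ∈ closure s ∩ U), (⟨x, hx.2⟩ : U) ∈ closure (Subtype.val ⁻¹' s) :=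
    fun hx => closure_subtype.2 <| by
      rw [Subtype.image_preimage_coe]
      exact hU.inter_closure ⟨hx.2, hx.1⟩
  exact fun x hx y hy => hlip (hmem hx) (hmem hy)

end Topology

theorem ae_forall_preimage_of_ae {X Y : Type*} [MeasurableSpace X] [MeasurableSpace Y]
    {μ : Measure X} {ν : Measure Y} {f : X → Y} {s : Set X} {p : X → Prop}
    (hN : ∀ A ⊆ s, μ A = 0 → ν (f '' A) = 0) (h : ∀ᵐ x ∂μ, x ∈ s → p x) :
    ∀ᵐ y ∂ν, ∀ x ∈ s, f x = y → p x := by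
  have hbad : ν (f '' {x | x ∈ s ∧ ¬p x}) = 0 :=
    hN _ (sep_subset _ _) <| measure_mono_null
      (fun x (hx : x ∈ s ∧ ¬p x) (hp : x ∈ s → p x) => hx.2 (hp hx.1)) (ae_iff.1 h)
  filter_upwards [measure_eq_zero_iff_ae_notMem.1 hbad] with y hy x hx hxy
  by_contra hp
  exact hy ⟨x, ⟨hx, hp⟩, hxy⟩

theorem HasFDerivWithinAt.image_of_leftInvOn {𝕜 E F : Type*} [NontriviallyNormedField 𝕜]
    [NormedAddCommGroup E] [NormedSpace 𝕜 E] [NormedAddCommGroup F] [NormedSpace 𝕜 F]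
    {Φ : E → F} {Ψ : F → E} {s : Set E} {x : E} {L : E ≃L[𝕜] F}
    (hΦ : HasFDerivWithinAt Φ (L : E →L[𝕜] F) s x) (hΨ : LeftInvOn Ψ Φ s)
    (hΨc : ContinuousWithinAt Ψ (Φ '' s) (Φ x)) (hx : x ∈ s) :
    HasFDerivWithinAt Ψ (L.symm : F →L[𝕜] E) (Φ '' s) (Φ x) := by
  have hΨx : Ψ (Φ x) = x := hΨ hx
  refine HasFDerivWithinAt.of_local_left_inverse ?_ (hΨx ▸ hΦ) ⟨x, hx, rfl⟩ ?_
  · refine tendsto_nhdsWithin_iff.2 ⟨hΨx ▸ hΨc, eventually_mem_nhdsWithin.mono ?_⟩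
    rintro _ ⟨y, hy, rfl⟩
    rwa [hΨ hy]
  · refine eventually_mem_nhdsWithin.mono ?_
    rintro _ ⟨y, hy, rfl⟩
    rw [hΨ hy]

section FiniteDimensional

variable {E : Type*} [NormedAddCommGroup E] [NormedSpace ℝ E] [FiniteDimensional ℝ E]
  [MeasurableSpace E] [BorelSpace E] {μ : Measure E} [μ.IsAddHaarMeasure]

theorem LipschitzOnWith.ae_forall_hasFDerivWithinAt_equiv {f : E → E} {s : Set E} {K : ℝ≥0}
    (hf : LipschitzOnWith K f s) (hN : ∀ A ⊆ s, μ A = 0 → μ (f '' A) = 0) :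
    ∀ᵐ y ∂μ, ∀ x ∈ s, f x = y → ∃ L : E ≃L[ℝ] E, HasFDerivWithinAt f (L : E →L[ℝ] E) s x := by
  set Z := {x | x ∈ s ∧ DifferentiableWithinAt ℝ f s x ∧ (fderivWithin ℝ f s x).det = 0}
  have hZ : μ (f '' Z) = 0 := addHaar_image_eq_zero_of_det_fderivWithin_eq_zero μ
    (fun x hx => hx.2.1.hasFDerivWithinAt.mono (sep_subset _ _)) fun x hx => hx.2.2
  filter_upwards [ae_forall_preimage_of_ae hN hf.ae_differentiableWithinAt_of_mem,
    measure_eq_zero_iff_ae_notMem.1 hZ] with y hdiff hZy x hx hxy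
  have hd := hdiff x hx hxy
  have hdet : (fderivWithin ℝ f s x).det ≠ 0 := fun h0 => hZy ⟨x, ⟨hx, hd, h0⟩, hxy⟩
  exact ⟨(LinearMap.equivOfDetNeZero _ hdet).toContinuousLinearEquiv, hd.hasFDerivWithinAt⟩

end FiniteDimensional

section BoundedGrowth

variable {X Y : Type*} [PseudoMetricSpace X] [MeasurableSpace X] [PseudoMetricSpace Y]

def boundedGrowthSet (μ : Measure X) (f : X → Y) (δ : ℝ≥0∞) (k : ℝ≥0) (ρ : ℝ) : Set X :=
  {x | ∀ r ∈ Ioo 0 ρ,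
    μ (closedBall x r \ {y | dist (f y) (f x) ≤ k * dist y x}) ≤ δ * μ (closedBall x r)}

variable {E : Type*} [NormedAddCommGroup E] [NormedSpace ℝ E] [FiniteDimensional ℝ E]
  [MeasurableSpace E] [BorelSpace E] {μ : Measure E} [μ.IsAddHaarMeasure]
  {f : E → Y} {δ : ℝ≥0∞} {k : ℝ≥0} {ρ : ℝ}

theorem exists_common_neighbor_of_mem_boundedGrowthSet
    (hδ : δ * 2 ^ (finrank ℝ E + 1) < 1) {x z : E} (hx : x ∈ boundedGrowthSet μ f δ k ρ)
    (hz : z ∈ boundedGrowthSet μ f δ k ρ) (hxz : 0 < dist x z) (hρ : 2 * dist x z < ρ) :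
    ∃ w ∈ closedBall x (dist x z),
      dist (f w) (f x) ≤ k * dist w x ∧ dist (f w) (f z) ≤ k * dist w z := by
  set d := dist x z
  set G : E → Set E := fun a => {y | dist (f y) (f a) ≤ k * dist y a}
  have hB0 : μ (closedBall x d) ≠ 0 := (measure_closedBall_pos μ x hxz).ne'
  have hBtop : μ (closedBall x d) ≠ ∞ := measure_closedBall_lt_top.ne
  have hdouble : ∀ a, μ (closedBall a (2 * d)) = 2 ^ finrank ℝ E * μ (closedBall x d) := by
    intro a
    rw [Measure.addHaar_closedBall_mul μ a zero_le_two dist_nonneg,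
      ← Measure.addHaar_closedBall_center μ x, ENNReal.ofReal_pow zero_le_two,
      ENNReal.ofReal_ofNat]
  have hcover : closedBall x d \ (G x ∩ G z) ⊆
      (closedBall x (2 * d) \ G x) ∪ (closedBall z (2 * d) \ G z) := by
    rintro y ⟨hy, hyG⟩
    have hyx : dist y x ≤ d := hy
    rcases not_and_or.1 hyG with h | h
    · exact Or.inl ⟨closedBall_subset_closedBall (by linarith) hy, h⟩
    · refine Or.inr ⟨?_, h⟩
      show dist y z ≤ 2 * d
      linarith [dist_triangle y x z]
  have hsmall : μ (closedBall x d \ (G x ∩ G z)) < μ (closedBall x d) :=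
    calc μ (closedBall x d \ (G x ∩ G z))
        ≤ μ (closedBall x (2 * d) \ G x) + μ (closedBall z (2 * d) \ G z) :=
          (measure_mono hcover).trans (measure_union_le _ _)
      _ ≤ δ * μ (closedBall x (2 * d)) + δ * μ (closedBall z (2 * d)) :=
          add_le_add (hx _ ⟨by positivity, hρ⟩) (hz _ ⟨by positivity, hρ⟩)
      _ = μ (closedBall x d) * (δ * 2 ^ (finrank ℝ E + 1)) := by
          rw [hdouble, hdouble, pow_succ]; ring
      _ < μ (closedBall x d) * 1 := ENNReal.mul_lt_mul_right hB0 hBtop hδ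
      _ = μ (closedBall x d) := mul_one _
  obtain ⟨w, hw, hwx, hwz⟩ : (closedBall x d ∩ (G x ∩ G z)).Nonempty := by
    by_contra hempty
    refine hsmall.ne (congrArg μ (sdiff_eq_left.2 ?_))
    exact disjoint_iff_inter_eq_empty.2 (not_nonempty_iff_eq_empty.1 hempty)
  exact ⟨w, hw, hwx, hwz⟩

theorem lipschitzOnWith_boundedGrowthSet_inter_ball (hδ : δ * 2 ^ (finrank ℝ E + 1) < 1)
    (c : E) : LipschitzOnWith (3 * k) f (boundedGrowthSet μ f δ k ρ ∩ ball c (ρ / 4)) := by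
  refine LipschitzOnWith.of_dist_le_mul fun x hx z hz => ?_
  rcases (dist_nonneg : 0 ≤ dist x z).eq_or_lt with h0 | hxz
  · rw [← h0, dist_eq_zero.1 h0.symm, dist_self]
    positivity
  have hρ : 2 * dist x z < ρ := by
    linarith [dist_triangle_right x z c, mem_ball.1 hx.2, mem_ball.1 hz.2]
  obtain ⟨w, hw, hwx, hwz⟩ :=
    exists_common_neighbor_of_mem_boundedGrowthSet hδ hx.1 hz.1 hxz hρ
  have hwx' : dist w x ≤ dist x z := hw
  have hwz' : dist w z ≤ 2 * dist x z := by linarith [dist_triangle w x z]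
  calc dist (f x) (f z) ≤ dist (f w) (f x) + dist (f w) (f z) := dist_triangle_left _ _ _
    _ ≤ k * dist x z + k * (2 * dist x z) :=
        add_le_add (hwx.trans (by gcongr)) (hwz.trans (by gcongr))
    _ = ↑(3 * k) * dist x z := by push_cast; ring

end BoundedGrowth

theorem eventually_dist_le_of_tendsto_remainder {E F : Type*} [NormedAddCommGroup E]
    [NormedSpace ℝ E] [NormedAddCommGroup F] [NormedSpace ℝ F] {f : E → F} {L : E →L[ℝ] F}
    {s : Set E} {x : E}
    (h : Tendsto (fun y => ‖f y - f x - L (y - x)‖ / ‖y - x‖) (𝓝[s \ {x}] x) (𝓝 0))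
    {k : ℝ} (hk : ‖L‖ < k) : ∀ᶠ y in 𝓝[s] x, dist (f y) (f x) ≤ k * dist y x := by
  have hrem := h.eventually (gt_mem_nhds (sub_pos.2 hk))
  rw [eventually_nhdsWithin_iff] at hrem ⊢
  filter_upwards [hrem] with y hy hys
  rcases eq_or_ne y x with rfl | hyx
  · simp
  have hpos : 0 < ‖y - x‖ := norm_pos_iff.2 (sub_ne_zero.2 hyx)
  rw [dist_eq_norm, dist_eq_norm]
  calc ‖f y - f x‖ ≤ ‖f y - f x - L (y - x)‖ + ‖L (y - x)‖ := norm_le_norm_sub_add _ _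
    _ ≤ (k - ‖L‖) * ‖y - x‖ + ‖L‖ * ‖y - x‖ :=
        add_le_add ((div_lt_iff₀ hpos).1 (hy ⟨hys, hyx⟩)).le (L.le_opNorm _)
    _ = k * ‖y - x‖ := by ring

section Euclidean

variable {n : ℕ}

local notation "𝕍" => EuclideanSpace ℝ (Fin n)

theorem ae_densityPt {s : Set 𝕍} (hs : MeasurableSet s) : ∀ᵐ x, x ∈ s → DensityPt s x := by
  filter_upwards [Besicovitch.ae_tendsto_measure_inter_div_of_measurableSet volume hs]
    with x hx hxs
  unfold DensityPt
  simpa [hxs] using hx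

theorem DensityPt.tendsto_measure_diff_div {s : Set 𝕍} {x : 𝕍} (h : DensityPt s x)
    (hs : MeasurableSet s) :
    Tendsto (fun r => volume (closedBall x r \ s) / volume (closedBall x r)) (𝓝[>] 0) (𝓝 0) := by
  have hcompl : Tendsto (fun r => 1 - volume (s ∩ closedBall x r) / volume (closedBall x r))
      (𝓝[>] 0) (𝓝 0) := by
    simpa using ENNReal.Tendsto.sub tendsto_const_nhds h (Or.inl ENNReal.one_ne_top)
  refine hcompl.congr' (eventually_mem_nhdsWithin.mono fun r (hr : 0 < r) => ?_)
  have hB0 : volume (closedBall x r) ≠ 0 := (measure_closedBall_pos volume x hr).ne'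
  have hBtop : volume (closedBall x r) ≠ ∞ := measure_closedBall_lt_top.ne
  rw [← ENNReal.div_self hB0 hBtop, ← ENNReal.sub_div fun _ _ => hB0,
    ← measure_sdiff inter_subset_right (hs.inter measurableSet_closedBall).nullMeasurableSet
      (measure_ne_top_of_subset inter_subset_right hBtop), sdiff_inter_self_eq_sdiff]

theorem HasFDerivWithinAt.approxDiffAt {F : Type*} [NormedAddCommGroup F] [NormedSpace ℝ F]
    {f : 𝕍 → F} {L : 𝕍 →L[ℝ] F} {s : Set 𝕍} {x : 𝕍} (h : HasFDerivWithinAt f L s x)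
    (hs : MeasurableSet s) (hx : DensityPt s x) : ApproxDiffAt f L x :=
  ⟨s, hs, hx, ((hasFDerivWithinAt_iff_tendsto.1 h).mono_left (nhdsWithin_mono x sdiff_subset)).congr
    fun y => by rw [div_eq_inv_mul]⟩

theorem ApproxDiffAt.exists_mem_boundedGrowthSet {F : Type*} [NormedAddCommGroup F]
    [NormedSpace ℝ F] {f : 𝕍 → F} {L : 𝕍 →L[ℝ] F} {x : 𝕍} (h : ApproxDiffAt f L x) {k : ℝ≥0}
    (hk : ‖L‖ < k) {δ : ℝ≥0∞} (hδ : 0 < δ) :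
    ∃ ρ > 0, x ∈ boundedGrowthSet volume f δ k ρ := by
  obtain ⟨E, hEm, hEx, hf⟩ := h
  obtain ⟨ε, hε, hgrowth⟩ := Metric.eventually_nhds_iff_ball.1
    (eventually_nhdsWithin_iff.1 (eventually_dist_le_of_tendsto_remainder hf hk))
  obtain ⟨ρ, hρ, hdens⟩ := (nhdsGT_basis (0 : ℝ)).eventually_iff.1
    ((hEx.tendsto_measure_diff_div hEm).eventually (gt_mem_nhds hδ))
  refine ⟨min ε ρ, lt_min hε hρ, fun r hr => ?_⟩
  have hB0 : volume (closedBall x r) ≠ 0 := (measure_closedBall_pos volume x hr.1).ne'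
  calc volume (closedBall x r \ {y | dist (f y) (f x) ≤ k * dist y x})
      ≤ volume (closedBall x r \ E) := measure_mono fun y hy => ⟨hy.1, fun hyE =>
        hy.2 (hgrowth y (closedBall_subset_ball (hr.2.trans_le (min_le_left _ _)) hy.1) hyE)⟩
    _ ≤ δ * volume (closedBall x r) := (ENNReal.div_le_iff hB0 measure_closedBall_lt_top.ne).1
        (hdens ⟨hr.1, hr.2.trans_le (min_le_right _ _)⟩).le

theorem exists_lipschitzOnWith_cover_of_approxDiffAt {F : Type*} [NormedAddCommGroup F]
    [NormedSpace ℝ F] {U : Set 𝕍} {f : 𝕍 → F} (hU : IsOpen U) (hf : ContinuousOn f U) :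
    ∃ P : ℕ × ℕ × ℕ → Set 𝕍, (∀ i, MeasurableSet (P i)) ∧ (∀ i, P i ⊆ U) ∧
      (∀ i, ∃ K, LipschitzOnWith K f (P i)) ∧
      ∀ x ∈ U, (∃ L, ApproxDiffAt f L x) → ∃ i, x ∈ P i := by
  obtain ⟨δ, hδ, hδ2⟩ := ENNReal.exists_pos_mul_lt
    (ENNReal.pow_ne_top ENNReal.ofNat_ne_top : (2 : ℝ≥0∞) ^ (finrank ℝ 𝕍 + 1) ≠ ∞) one_ne_zero
  obtain ⟨u, hu⟩ := TopologicalSpace.exists_dense_seq 𝕍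
  set G : ℕ → ℕ → Set 𝕍 := fun k m => boundedGrowthSet volume f δ k (1 / (m + 1))
  -- `boundedGrowthSet` need not be measurable; its closure within `U` is, and by continuity `f`
  -- stays Lipschitz there.
  refine ⟨fun i => closure (G i.1 i.2.1 ∩ ball (u i.2.2) (1 / (i.2.1 + 1) / 4)) ∩ U,
    fun i => isClosed_closure.measurableSet.inter hU.measurableSet, fun i => inter_subset_right,
    fun i => ⟨_, (lipschitzOnWith_boundedGrowthSet_inter_ball hδ2 _).closure_inter_of_continuousOn
      hU hf⟩, ?_⟩
  rintro x hx ⟨L, hL⟩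
  obtain ⟨k, hk⟩ := exists_nat_gt ‖L‖
  obtain ⟨ρ, hρ, hxρ⟩ := hL.exists_mem_boundedGrowthSet (k := k) (by exact_mod_cast hk) hδ
  obtain ⟨m, hm⟩ := exists_nat_one_div_lt hρ
  obtain ⟨j, hj⟩ := hu.exists_dist_lt x (by positivity : (0 : ℝ) < 1 / (m + 1) / 4)
  exact ⟨(k, m, j), subset_closure ⟨fun r hr => hxρ r ⟨hr.1, hr.2.trans hm⟩, mem_ball.2 hj⟩, hx⟩

theorem ae_approxDiffAt_inverse_of_lipschitzOnWith {Φ Ψ : 𝕍 → 𝕍} {s : Set 𝕍} {K : ℝ≥0}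
    (hs : MeasurableSet s) (hΦ : LipschitzOnWith K Φ s) (hΨ : LeftInvOn Ψ Φ s)
    (hΨc : ContinuousOn Ψ (Φ '' s)) (hN : ∀ A ⊆ s, volume A = 0 → volume (Φ '' A) = 0) :
    ∀ᵐ y, y ∈ Φ '' s → ∃ L : 𝕍 ≃L[ℝ] 𝕍,
      ApproxDiffAt Φ (L : 𝕍 →L[ℝ] 𝕍) (Ψ y) ∧ ApproxDiffAt Ψ (L.symm : 𝕍 →L[ℝ] 𝕍) y := by
  have hΦs : MeasurableSet (Φ '' s) := hs.image_of_continuousOn_injOn hΦ.continuousOn hΨ.injOn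
  filter_upwards [hΦ.ae_forall_hasFDerivWithinAt_equiv hN,
    ae_forall_preimage_of_ae hN (ae_densityPt hs), ae_densityPt hΦs] with y hderiv hdens hdens'
  rintro ⟨x, hx, rfl⟩
  obtain ⟨L, hL⟩ := hderiv x hx rfl
  refine ⟨L, ?_, ?_⟩
  · rw [hΨ hx]
    exact hL.approxDiffAt hs (hdens x hx rfl)
  · exact (hL.image_of_leftInvOn hΨ (hΨc _ ⟨x, hx, rfl⟩) hx).approxDiffAt hΦs
      (hdens' ⟨x, hx, rfl⟩)

end Euclidean

/-- If a homeomorphism onto its image `Φ : U → ℝⁿ` is a.e. approximately differentiable and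
satisfies the Lusin condition (N), then its inverse `Ψ` is a.e. approximately
differentiable on `Φ(U)` and `D_a Ψ(y) = (D_a Φ)⁻¹(Ψ(y))` for a.e. `y ∈ Φ(U)`. -/
theorem stmt18 {n : ℕ} (U : Set (EuclideanSpace ℝ (Fin n))) (hU : IsOpen U)
    (Φ Ψ : EuclideanSpace ℝ (Fin n) → EuclideanSpace ℝ (Fin n))
    (hemb : Topology.IsEmbedding (U.restrict Φ))
    (hΨ : ∀ x ∈ U, Ψ (Φ x) = x)
    (hdiff : ∀ᵐ x ∂volume, x ∈ U → ∃ L, ApproxDiffAt Φ L x)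
    (hN : ∀ A ⊆ U, volume A = 0 → volume (Φ '' A) = 0) :
    ∀ᵐ y ∂volume, y ∈ Φ '' U →
      ∃ L : EuclideanSpace ℝ (Fin n) ≃L[ℝ] EuclideanSpace ℝ (Fin n),
        ApproxDiffAt Φ (L : EuclideanSpace ℝ (Fin n) →L[ℝ] EuclideanSpace ℝ (Fin n)) (Ψ y) ∧
        ApproxDiffAt Ψ (L.symm : EuclideanSpace ℝ (Fin n) →L[ℝ] EuclideanSpace ℝ (Fin n)) y := by
  have hΨc : ContinuousOn Ψ (Φ '' U) := hemb.continuousOn_image_of_leftInvOn hΨ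
  obtain ⟨P, hPm, hPU, hPlip, hcover⟩ := exists_lipschitzOnWith_cover_of_approxDiffAt hU
    (continuousOn_iff_continuous_domRestrict.2 hemb.continuous)
  have hpiece := fun i => (hPlip i).elim fun K hK =>
    ae_approxDiffAt_inverse_of_lipschitzOnWith (hPm i) hK (fun x hx => hΨ x (hPU i hx))
      (hΨc.mono (image_mono (hPU i))) fun A hA => hN A (hA.trans (hPU i))
  filter_upwards [ae_forall_preimage_of_ae hN hdiff, ae_all_iff.2 hpiece] with y hy hgood
  rintro ⟨x, hx, rfl⟩
  obtain ⟨i, hi⟩ := hcover x hx (hy x hx rfl)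
  exact hgood i ⟨x, hi, rfl⟩
end

section
/- Let E ⊂ ℝⁿ be a measurable set of finite Lebesgue measure. On the space of measurable real-valued functions on E, identified when equal almost everywhere, define d_L(f,g) = |{x ∈ E : f(x) ≠ g(x)}|. Then d_L is a metric and the space is complete: every Cauchy sequence with respect to d_L converges in d_L. -/
/-! Pass to a subsequence `G` of the Cauchy sequence whose consecutive distances are summable.
Off the tail union `⋃_{k ≥ m} {G k ≠ G (k+1)}`, whose measure tends to zero, `G` is eventually
constant from index `m` on, so it converges there to `G m`; hence the pointwise limit of `G`
(which is measurable) is at distance at most the tail measure from `G m`. A Cauchy sequence with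
a convergent subsequence converges. -/

open MeasureTheory Filter

/-- The Lusin distance between two functions relative to a set `E`. -/
noncomputable def lusinDist {n : ℕ} (E : Set (Fin n → ℝ)) (f g : (Fin n → ℝ) → ℝ) : ℝ :=
  (volume {x ∈ E | f x ≠ g x}).toReal

open scoped ENNReal Topology

theorem tendsto_nhds_of_forall_succ_eq {β : Type*} [TopologicalSpace β] {u : ℕ → β} {m : ℕ}
    (h : ∀ j, u (j + m + 1) = u (j + m)) : Tendsto u atTop (𝓝 (u m)) := by
  have hconst : ∀ j, u (j + m) = u m := by
    intro j
    induction j with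
    | zero => rw [zero_add]
    | succ j ih => rw [add_right_comm, h, ih]
  exact (tendsto_add_atTop_iff_nat m).1 (tendsto_const_nhds.congr fun j => (hconst j).symm)

section Disagreement

variable {α β : Type*} [MeasurableSpace α] {μ : Measure α}

theorem measureReal_setOf_ne_eq_zero_iff [IsFiniteMeasure μ] {f g : α → β} :
    μ.real {x | f x ≠ g x} = 0 ↔ f =ᵐ[μ] g :=
  (measureReal_eq_zero_iff).trans ae_iff.symm

theorem measureReal_setOf_ne_le_add [IsFiniteMeasure μ] (f g h : α → β) :
    μ.real {x | f x ≠ h x} ≤ μ.real {x | f x ≠ g x} + μ.real {x | g x ≠ h x} := by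
  have hsub : {x | f x ≠ h x} ⊆ {x | f x ≠ g x} ∪ {x | g x ≠ h x} := by
    intro x hfh
    by_contra hx
    simp only [Set.mem_union, Set.mem_ofPred_eq, not_or, not_not] at hx
    exact hfh (hx.1.trans hx.2)
  exact (measureReal_mono hsub).trans (measureReal_union_le _ _)

theorem measure_setOf_ne_limUnder_le [TopologicalSpace β] [T2Space β] [Nonempty β]
    (G : ℕ → α → β) (m : ℕ) :
    μ {x | G m x ≠ limUnder atTop (G · x)} ≤ ∑' j, μ {x | G (j + m) x ≠ G (j + m + 1) x} := by
  refine (measure_mono fun x hx => ?_).trans (measure_iUnion_le _)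
  by_contra hx'
  simp only [Set.mem_iUnion, Set.mem_ofPred_eq, not_exists, not_not] at hx'
  exact hx (tendsto_nhds_of_forall_succ_eq (u := (G · x)) fun j => (hx' j).symm).limUnder_eq.symm

theorem tendsto_measure_setOf_ne_limUnder [TopologicalSpace β] [T2Space β] [Nonempty β]
    (G : ℕ → α → β) (hG : ∑' k, μ {x | G k x ≠ G (k + 1) x} ≠ ∞) :
    Tendsto (fun m => μ {x | G m x ≠ limUnder atTop (G · x)}) atTop (𝓝 0) :=
  tendsto_of_tendsto_of_tendsto_of_le_of_le tendsto_const_nhds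
    (ENNReal.tendsto_sum_nat_add _ hG) (fun _ => zero_le) (measure_setOf_ne_limUnder_le G)

theorem tendsto_measureReal_setOf_ne_of_subseq [IsFiniteMeasure μ] {F : ℕ → α → β} {f : α → β}
    {φ : ℕ → ℕ} (hφ : Tendsto φ atTop atTop)
    (hCauchy : ∀ ε > (0 : ℝ), ∃ N : ℕ, ∀ j ≥ N, ∀ k ≥ N, μ.real {x | F j x ≠ F k x} < ε)
    (hsub : Tendsto (fun m => μ.real {x | F (φ m) x ≠ f x}) atTop (𝓝 0)) :
    Tendsto (fun k => μ.real {x | F k x ≠ f x}) atTop (𝓝 0) := by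
  rw [Metric.tendsto_atTop]
  intro ε hε
  obtain ⟨N, hN⟩ := hCauchy (ε / 2) (half_pos hε)
  obtain ⟨m, hm, hφm⟩ :=
    ((hsub.eventually (gt_mem_nhds (half_pos hε))).and (hφ.eventually_ge_atTop N)).exists
  refine ⟨N, fun k hk => ?_⟩
  rw [Real.dist_0_eq_abs, abs_of_nonneg measureReal_nonneg]
  calc μ.real {x | F k x ≠ f x}
      ≤ μ.real {x | F k x ≠ F (φ m) x} + μ.real {x | F (φ m) x ≠ f x} :=
        measureReal_setOf_ne_le_add _ _ _
    _ < ε / 2 + ε / 2 := add_lt_add (hN k hk _ hφm) hm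
    _ = ε := add_halves ε

theorem exists_measurable_tendsto_measureReal_setOf_ne [IsFiniteMeasure μ] [TopologicalSpace β]
    [PolishSpace β] [MeasurableSpace β] [BorelSpace β] [Nonempty β] {F : ℕ → α → β}
    (hF : ∀ k, Measurable (F k))
    (hCauchy : ∀ ε > (0 : ℝ), ∃ N : ℕ, ∀ j ≥ N, ∀ k ≥ N, μ.real {x | F j x ≠ F k x} < ε) :
    ∃ f : α → β, Measurable f ∧ Tendsto (fun k => μ.real {x | F k x ≠ f x}) atTop (𝓝 0) := by
  choose N hN using fun i : ℕ => hCauchy ((1 / 2) ^ i) (by positivity)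
  obtain ⟨φ, hφ, hφN⟩ := extraction_forall_of_eventually' (P := fun i k => N i ≤ k)
    fun i => ⟨N i, fun _ => id⟩
  set G : ℕ → α → β := fun i => F (φ i)
  have hstep : ∀ i, μ.real {x | G i x ≠ G (i + 1) x} ≤ (1 / 2) ^ i := fun i =>
    (hN i _ (hφN i) _ ((hφN i).trans (hφ.monotone i.le_succ))).le
  have hsummable : Summable fun i => μ.real {x | G i x ≠ G (i + 1) x} :=
    summable_geometric_two.of_nonneg_of_le (fun _ => measureReal_nonneg) hstep
  have hsum : ∑' i, μ {x | G i x ≠ G (i + 1) x} ≠ ∞ := by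
    rw [tsum_congr fun i => (ofReal_measureReal).symm,
      ← ENNReal.ofReal_tsum_of_nonneg (fun _ => measureReal_nonneg) hsummable]
    exact ENNReal.ofReal_ne_top
  refine ⟨fun x => limUnder atTop (G · x),
    (StronglyMeasurable.limUnder fun i => (hF (φ i)).stronglyMeasurable).measurable, ?_⟩
  refine tendsto_measureReal_setOf_ne_of_subseq hφ.tendsto_atTop hCauchy ?_
  exact (ENNReal.tendsto_toReal ENNReal.zero_ne_top).comp
    (tendsto_measure_setOf_ne_limUnder G hsum)

end Disagreement

theorem lusinDist_comm {n : ℕ} (E : Set (Fin n → ℝ)) (f g : (Fin n → ℝ) → ℝ) :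
    lusinDist E f g = lusinDist E g f := by
  simp only [lusinDist, ne_comm]

theorem lusinDist_eq_measureReal_restrict {n : ℕ} {E : Set (Fin n → ℝ)}
    {f g : (Fin n → ℝ) → ℝ} (hf : Measurable f) (hg : Measurable g) :
    lusinDist E f g = (volume.restrict E).real {x | f x ≠ g x} := by
  rw [measureReal_restrict_apply (t := {x | f x ≠ g x}) (measurableSet_eq_fun hf hg).compl,
    Set.inter_comm]
  rfl

theorem stmt19_general {n : ℕ} (E : Set (Fin (n + 1) → ℝ))
    (hEfin : volume E < ⊤) :
    (∀ f g : (Fin (n + 1) → ℝ) → ℝ, Measurable f → Measurable g →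
      (lusinDist E f g = 0 ↔ ∀ᵐ x ∂volume.restrict E, f x = g x)) ∧
    (∀ f g : (Fin (n + 1) → ℝ) → ℝ, lusinDist E f g = lusinDist E g f) ∧
    (∀ f g h : (Fin (n + 1) → ℝ) → ℝ, Measurable f → Measurable g → Measurable h →
      lusinDist E f h ≤ lusinDist E f g + lusinDist E g h) ∧
    (∀ F : ℕ → ((Fin (n + 1) → ℝ) → ℝ), (∀ k, Measurable (F k)) →
      (∀ ε > (0 : ℝ), ∃ N : ℕ, ∀ j ≥ N, ∀ k ≥ N, lusinDist E (F j) (F k) < ε) →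
      ∃ f : (Fin (n + 1) → ℝ) → ℝ, Measurable f ∧
        Tendsto (fun k => lusinDist E (F k) f) atTop (nhds 0)) := by
  have : IsFiniteMeasure (volume.restrict E) := isFiniteMeasure_restrict.2 hEfin.ne
  refine ⟨fun f g hf hg => ?_, lusinDist_comm E, fun f g h hf hg hh => ?_, fun F hF hCauchy => ?_⟩
  · rw [lusinDist_eq_measureReal_restrict hf hg]
    exact measureReal_setOf_ne_eq_zero_iff
  · rw [lusinDist_eq_measureReal_restrict hf hh, lusinDist_eq_measureReal_restrict hf hg,
      lusinDist_eq_measureReal_restrict hg hh]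
    exact measureReal_setOf_ne_le_add f g h
  · have hdist : ∀ j k, lusinDist E (F j) (F k) =
        (volume.restrict E).real {x | F j x ≠ F k x} := fun j k =>
      lusinDist_eq_measureReal_restrict (hF j) (hF k)
    simp only [hdist] at hCauchy
    obtain ⟨f, hf, hlim⟩ := exists_measurable_tendsto_measureReal_setOf_ne hF hCauchy
    exact ⟨f, hf, hlim.congr fun k => (lusinDist_eq_measureReal_restrict (hF k) hf).symm⟩

/-- On a measurable set `E ⊆ ℝⁿ` of finite measure, `d_L(f,g) = |{f ≠ g}|` is a metric on
measurable functions (identified a.e.) and the space is complete. -/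
theorem stmt19 {n : ℕ} (E : Set (Fin (n + 1) → ℝ)) (hEm : MeasurableSet E)
    (hEfin : volume E < ⊤) :
    (∀ f g : (Fin (n + 1) → ℝ) → ℝ, Measurable f → Measurable g →
      (lusinDist E f g = 0 ↔ ∀ᵐ x ∂volume.restrict E, f x = g x)) ∧
    (∀ f g : (Fin (n + 1) → ℝ) → ℝ, lusinDist E f g = lusinDist E g f) ∧
    (∀ f g h : (Fin (n + 1) → ℝ) → ℝ, Measurable f → Measurable g → Measurable h →
      lusinDist E f h ≤ lusinDist E f g + lusinDist E g h) ∧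
    (∀ F : ℕ → ((Fin (n + 1) → ℝ) → ℝ), (∀ k, Measurable (F k)) →
      (∀ ε > (0 : ℝ), ∃ N : ℕ, ∀ j ≥ N, ∀ k ≥ N, lusinDist E (F j) (F k) < ε) →
      ∃ f : (Fin (n + 1) → ℝ) → ℝ, Measurable f ∧
        Tendsto (fun k => lusinDist E (F k) f) atTop (nhds 0)) :=
  stmt19_general E hEfin
end
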